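/- arXiv:2404.00263 — 2 statements merged into one kernel-verified Lean document; each statement's English description precedes it below -/
import Mathlib

section
/- Let P be a finite poset and let A, B, C be pairwise distinct antichains of P. Then conv{ρ(A), ρ(B), ρ(C)} is a triangular 2-face of the chain polytope C(P) if and only if each of the symmetric differences A △ B, B △ C, and C △ A is connected in P. -/
open Finset
open scoped Classical

variable (P : Type*) [Fintype P] [PartialOrder P]

/-- The comparability graph of a poset. -/
def compGraph : SimpleGraph P where
  Adj x y := x ≠ y ∧ (x ≤ y ∨ y ≤ x)
  symm := ⟨fun _ _ h => ⟨h.1.symm, h.2.symm⟩⟩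
  loopless := ⟨fun _ h => h.1 rfl⟩

/-- A subset `W` of `P` is connected in `P` if the subgraph of the comparability
graph induced on `W` is connected (this includes `W` being nonempty). -/
def ConnIn (W : Set P) : Prop :=
  (SimpleGraph.induce W (compGraph P)).Connected

/-- A poset ideal (down-set). -/
def IsIdealF (I : Finset P) : Prop :=
  ∀ ⦃x y : P⦄, x ∈ I → y ≤ x → y ∈ I

/-- An antichain of the poset. -/
def IsAntichainF (A : Finset P) : Prop :=
  IsAntichain (· ≤ ·) (↑A : Set P)

/-- The 0/1 indicator vector of a subset of `P`. -/
noncomputable def rho (W : Finset P) : P → ℝ :=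
  fun x => if x ∈ W then 1 else 0

/-- The order polytope of `P`. -/
def orderPolytope : Set (P → ℝ) :=
  {f | (∀ x, 0 ≤ f x ∧ f x ≤ 1) ∧ ∀ ⦃x y : P⦄, x ≤ y → f y ≤ f x}

/-- The chain polytope of `P`. -/
def chainPolytope : Set (P → ℝ) :=
  {f | (∀ x, 0 ≤ f x) ∧ ∀ s : Finset P, IsChain (· ≤ ·) (↑s : Set P) → ∑ x ∈ s, f x ≤ 1}

/-- `conv {u, v}` is an edge (1-dimensional exposed face) of the polytope `S`. -/
def IsEdgeOf (S : Set (P → ℝ)) (u v : P → ℝ) : Prop :=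
  u ≠ v ∧ IsExposed ℝ S (convexHull ℝ {u, v})

/-- `conv {u, v, w}` is a triangular 2-face of the polytope `S`. -/
def IsTriFaceOf (S : Set (P → ℝ)) (u v w : P → ℝ) : Prop :=
  u ≠ v ∧ u ≠ w ∧ v ≠ w ∧ IsExposed ℝ S (convexHull ℝ {u, v, w})

/-- The set of maximal elements of a subset of `P`. -/
noncomputable def maxSet (W : Finset P) : Finset P :=
  W.filter (fun x => ∀ y ∈ W, ¬ x < y)

/-- The set of minimal elements of a subset of `P`. -/
noncomputable def minSet (W : Finset P) : Finset P :=
  W.filter (fun x => ∀ y ∈ W, ¬ y < x)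

/-- The poset ideal generated by a subset of `P`. -/
noncomputable def genIdeal (A : Finset P) : Finset P :=
  univ.filter (fun x => ∃ a ∈ A, x ≤ a)

/-- The pair `{I, J}` belongs to `E*_O(P)`. -/
noncomputable def EstarO (I J : Finset P) : Prop :=
  IsIdealF P I ∧ IsIdealF P J ∧ I ≠ J ∧
    IsEdgeOf P (orderPolytope P) (rho P I) (rho P J) ∧
    ¬ IsEdgeOf P (chainPolytope P) (rho P (maxSet P I)) (rho P (maxSet P J))

/-- The pair `{A, B}` belongs to `E*_C(P)`. -/
noncomputable def EstarC (A B : Finset P) : Prop :=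
  IsAntichainF P A ∧ IsAntichainF P B ∧ A ≠ B ∧
    IsEdgeOf P (chainPolytope P) (rho P A) (rho P B) ∧
    ¬ IsEdgeOf P (orderPolytope P) (rho P (genIdeal P A)) (rho P (genIdeal P B))

/-- `Δ_O(P)`: unordered triples of pairwise distinct poset ideals spanning a
triangular 2-face of the order polytope. -/
def DeltaO : Set (Finset (Finset P)) :=
  {T | ∃ I J K : Finset P, T = {I, J, K} ∧ I ≠ J ∧ I ≠ K ∧ J ≠ K ∧
    IsIdealF P I ∧ IsIdealF P J ∧ IsIdealF P K ∧
    IsTriFaceOf P (orderPolytope P) (rho P I) (rho P J) (rho P K)}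

/-- `Δ_C(P)`: unordered triples of pairwise distinct antichains spanning a
triangular 2-face of the chain polytope. -/
def DeltaC : Set (Finset (Finset P)) :=
  {T | ∃ A B C : Finset P, T = {A, B, C} ∧ A ≠ B ∧ A ≠ C ∧ B ≠ C ∧
    IsAntichainF P A ∧ IsAntichainF P B ∧ IsAntichainF P C ∧
    IsTriFaceOf P (chainPolytope P) (rho P A) (rho P B) (rho P C)}

/-- `Δ*_O(P)`: triples in `Δ_O(P)` at least one of whose pairs lies in `E*_O(P)`. -/
def DeltaStarO : Set (Finset (Finset P)) :=
  {T | T ∈ DeltaO P ∧ ∃ I ∈ T, ∃ J ∈ T, I ≠ J ∧ EstarO P I J}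

/-- `Δ*_C(P)`: triples in `Δ_C(P)` at least one of whose pairs lies in `E*_C(P)`. -/
def DeltaStarC : Set (Finset (Finset P)) :=
  {T | T ∈ DeltaC P ∧ ∃ A ∈ T, ∃ B ∈ T, A ≠ B ∧ EstarC P A B}

/-- `r` is a rank function exhibiting `P` as a maximal ranked poset of rank `n`:
`r` is surjective onto `{0, …, n}` and `x < y ↔ r x < r y`. -/
def IsMaxRanked (r : P → ℕ) (n : ℕ) : Prop :=
  (∀ x, r x ≤ n) ∧ (∀ i, i ≤ n → ∃ x, r x = i) ∧ (∀ x y : P, x < y ↔ r x < r y)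

/-- The rank level `P_i`. -/
noncomputable def level (r : P → ℕ) (i : ℕ) : Finset P :=
  univ.filter (fun x => r x = i)

/-- `P` contains an `X`-poset as a subposet. -/
def ContainsX : Prop :=
  ∃ a b c d e : P,
    a ≠ b ∧ a ≠ c ∧ a ≠ d ∧ a ≠ e ∧ b ≠ c ∧ b ≠ d ∧ b ≠ e ∧ c ≠ d ∧ c ≠ e ∧ d ≠ e ∧
    a < c ∧ b < c ∧ c < d ∧ c < e ∧ ¬ a ≤ b ∧ ¬ b ≤ a ∧ ¬ d ≤ e ∧ ¬ e ≤ d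

section Aux

variable {P : Type*} [Fintype P] [PartialOrder P]

open scoped Classical

/-- crossing lemma for walks -/
lemma walk_crossing {V : Type*} {G : SimpleGraph V} {u v : V} (w : G.Walk u v)
    (Q : V → Prop) (hu : Q u) (hv : ¬ Q v) :
    ∃ a b, G.Adj a b ∧ Q a ∧ ¬ Q b := by
  induction w with
  | nil => exact absurd hu hv
  | @cons a b c hab p ih =>
    by_cases hb : Q b
    · exact ih hb hv
    · exact ⟨a, b, hab, hu, hb⟩

/-- From connectivity: no nontrivial split without comparable crossing pair. -/
lemma connIn_crossing {W : Finset P} (h : ConnIn P (↑W : Set P)) (S : Finset P)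
    (hSW : S ⊆ W) (h1 : S.Nonempty) (h2 : (W \ S).Nonempty) :
    ∃ x ∈ S, ∃ y ∈ W \ S, x ≠ y ∧ (x ≤ y ∨ y ≤ x) := by
  obtain ⟨x₀, hx₀⟩ := h1
  obtain ⟨y₀, hy₀⟩ := h2
  have hx₀W : x₀ ∈ W := hSW hx₀
  have hy₀W : y₀ ∈ W := (Finset.mem_sdiff.1 hy₀).1
  have hreach := h.preconnected ⟨x₀, by simpa using hx₀W⟩ ⟨y₀, by simpa using hy₀W⟩
  obtain ⟨p⟩ := hreach
  have := walk_crossing p (fun z => (z : P) ∈ S) (by simpa using hx₀)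
    (by simpa using (Finset.mem_sdiff.1 hy₀).2)
  obtain ⟨a, b, hab, ha, hb⟩ := this
  refine ⟨a, ha, b, ?_, ?_, ?_⟩
  · have hbW : (b : P) ∈ W := by
      have := b.2; simpa using this
    exact Finset.mem_sdiff.2 ⟨hbW, hb⟩
  · exact fun hh => (show _ ≠ _ ∧ _ from hab).1 (by simp [Subtype.ext hh])
  · exact (show _ ≠ _ ∧ _ from hab).2

/-- Converse: disconnected nonempty set splits with no comparable crossing pair. -/
lemma not_connIn_split {W : Finset P} (hne : W.Nonempty) (h : ¬ ConnIn P (↑W : Set P)) :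
    ∃ S : Finset P, S ⊆ W ∧ S.Nonempty ∧ (W \ S).Nonempty ∧
      ∀ x ∈ S, ∀ y ∈ W \ S, ¬ (x ≠ y ∧ (x ≤ y ∨ y ≤ x)) := by
  obtain ⟨w₀, hw₀⟩ := hne
  classical
  set G := SimpleGraph.induce (↑W : Set P) (compGraph P) with hG
  set S : Finset P := W.filter (fun z => ∃ hz : z ∈ W, G.Reachable ⟨w₀, by simpa using hw₀⟩ ⟨z, by simpa using hz⟩) with hS
  refine ⟨S, Finset.filter_subset _ _, ⟨w₀, ?_⟩, ?_, ?_⟩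
  · exact Finset.mem_filter.2 ⟨hw₀, ⟨hw₀, SimpleGraph.Reachable.refl _⟩⟩
  · -- W \ S nonempty, else connected
    by_contra hempty
    rw [Finset.not_nonempty_iff_eq_empty, Finset.sdiff_eq_empty_iff_subset] at hempty
    apply h
    show (SimpleGraph.induce (↑W : Set P) (compGraph P)).Connected
    rw [SimpleGraph.connected_iff]
    constructor
    · intro a b
      have ha : (a : P) ∈ S := hempty (by simpa using a.2)
      have hb : (b : P) ∈ S := hempty (by simpa using b.2)
      obtain ⟨_, _, hra⟩ := Finset.mem_filter.1 ha
      obtain ⟨_, _, hrb⟩ := Finset.mem_filter.1 hb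
      have hra' : G.Reachable ⟨w₀, by simpa using hw₀⟩ a := by
        convert hra using 2
      have hrb' : G.Reachable ⟨w₀, by simpa using hw₀⟩ b := by
        convert hrb using 2
      exact hra'.symm.trans hrb'
    · exact ⟨⟨w₀, by simpa using hw₀⟩⟩
  · intro x hx y hy hxy
    obtain ⟨hxW, hxw, hreach⟩ := Finset.mem_filter.1 hx
    have hyW : y ∈ W := (Finset.mem_sdiff.1 hy).1
    have hyS : y ∉ S := (Finset.mem_sdiff.1 hy).2
    apply hyS
    refine Finset.mem_filter.2 ⟨hyW, hyW, ?_⟩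
    have hadj : G.Adj ⟨x, by simpa using hxW⟩ ⟨y, by simpa using hyW⟩ := by
      show _ ≠ _ ∧ _
      refine ⟨?_, hxy.2⟩
      simpa [Subtype.ext_iff] using hxy.1
    exact (by convert hreach using 2 : G.Reachable _ _).trans hadj.reachable

end Aux
section Aux2

variable {P : Type*} [Fintype P] [PartialOrder P]

open scoped Classical

lemma antichainF_eq_of_le {A : Finset P} (hA : IsAntichainF P A) {x y : P}
    (hx : x ∈ A) (hy : y ∈ A) (hxy : x ≤ y) : x = y := by
  by_contra hne
  exact hA (by exact_mod_cast hx) (by exact_mod_cast hy) hne hxy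

lemma chain_inter_antichain_card_le_one {s A : Finset P}
    (hs : IsChain (· ≤ ·) (↑s : Set P)) (hA : IsAntichainF P A) :
    (s ∩ A).card ≤ 1 := by
  by_contra hgt
  push_neg at hgt
  obtain ⟨x, hx, y, hy, hxy⟩ := Finset.one_lt_card.1 hgt
  have hxs := Finset.mem_inter.1 hx
  have hys := Finset.mem_inter.1 hy
  have hcomp := hs (by exact_mod_cast hxs.1) (by exact_mod_cast hys.1) hxy
  rcases hcomp with h | h
  · exact hxy (antichainF_eq_of_le hA hxs.2 hys.2 h)
  · exact hxy ((antichainF_eq_of_le hA hys.2 hxs.2 h).symm)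

lemma sum_rho_eq_card {s A : Finset P} :
    ∑ x ∈ s, rho P A x = ((s ∩ A).card : ℝ) := by
  classical
  unfold rho
  rw [Finset.sum_boole]
  norm_num [Finset.filter_mem_eq_inter]

lemma rho_mem_chainPolytope {A : Finset P} (hA : IsAntichainF P A) :
    rho P A ∈ chainPolytope P := by
  constructor
  · intro x
    unfold rho
    split <;> norm_num
  · intro s hs
    rw [sum_rho_eq_card]
    exact_mod_cast chain_inter_antichain_card_le_one hs hA

lemma convex_chainPolytope : Convex ℝ (chainPolytope P) := by
  intro f hf g hg a b ha hb hab
  constructor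
  · intro x
    have := hf.1 x
    have := hg.1 x
    simp only [Pi.add_apply, Pi.smul_apply, smul_eq_mul]
    nlinarith
  · intro s hs
    have h1 := hf.2 s hs
    have h2 := hg.2 s hs
    simp only [Pi.add_apply, Pi.smul_apply, smul_eq_mul]
    rw [Finset.sum_add_distrib, ← Finset.mul_sum, ← Finset.mul_sum]
    nlinarith

lemma rho_inj {A B : Finset P} (h : rho P A = rho P B) : A = B := by
  ext x
  have := congrFun h x
  unfold rho at this
  by_cases hx : x ∈ A <;> by_cases hy : x ∈ B <;> simp [hx, hy] at this ⊢ <;> tauto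

lemma mem_genIdeal {A : Finset P} {x : P} : x ∈ genIdeal P A ↔ ∃ a ∈ A, x ≤ a := by
  unfold genIdeal
  simp

lemma subset_genIdeal {A : Finset P} : A ⊆ genIdeal P A :=
  fun a ha => mem_genIdeal.2 ⟨a, ha, le_refl a⟩

lemma genIdeal_trans {A B : Finset P} (h : A ⊆ genIdeal P B) :
    genIdeal P A ⊆ genIdeal P B := by
  intro x hx
  obtain ⟨a, ha, hxa⟩ := mem_genIdeal.1 hx
  obtain ⟨b, hb, hab⟩ := mem_genIdeal.1 (h ha)
  exact mem_genIdeal.2 ⟨b, hb, le_trans hxa hab⟩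

/-- key nesting lemma: connected symmetric difference forces comparable ideals -/
lemma ideal_comparable {A B : Finset P} (hA : IsAntichainF P A) (hB : IsAntichainF P B)
    (hconn : ConnIn P (↑((A \ B) ∪ (B \ A)) : Set P)) :
    genIdeal P A ⊆ genIdeal P B ∨ genIdeal P B ⊆ genIdeal P A := by
  classical
  set W : Finset P := (A \ B) ∪ (B \ A) with hW
  set S : Finset P := ((A \ B).filter (fun x => x ∈ genIdeal P B)) ∪
    ((B \ A).filter (fun x => x ∉ genIdeal P A)) with hSdef
  have hSW : S ⊆ W := by
    intro x hx
    rcases Finset.mem_union.1 hx with h | h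
    · exact Finset.mem_union.2 (Or.inl (Finset.mem_of_mem_filter _ h))
    · exact Finset.mem_union.2 (Or.inr (Finset.mem_of_mem_filter _ h))
  by_cases hSempty : S = ∅
  · -- B \ A ⊆ genIdeal A, so I(B) ⊆ I(A)
    right
    apply genIdeal_trans
    intro b hb
    by_cases hbA : b ∈ A
    · exact subset_genIdeal hbA
    · by_contra hbI
      have : b ∈ S := Finset.mem_union.2 (Or.inr (Finset.mem_filter.2
        ⟨Finset.mem_sdiff.2 ⟨hb, hbA⟩, hbI⟩))
      simp [hSempty] at this
  by_cases hSfull : W \ S = ∅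
  · -- A \ B ⊆ genIdeal B, so I(A) ⊆ I(B)
    left
    apply genIdeal_trans
    intro a ha
    by_cases haB : a ∈ B
    · exact subset_genIdeal haB
    · by_contra haI
      have haW : a ∈ W := Finset.mem_union.2 (Or.inl (Finset.mem_sdiff.2 ⟨ha, haB⟩))
      have haS : a ∉ S := by
        intro hc
        rcases Finset.mem_union.1 hc with h | h
        · exact haI (Finset.mem_filter.1 h).2
        · exact haB (Finset.mem_sdiff.1 (Finset.mem_filter.1 h).1).1
      have : a ∈ W \ S := Finset.mem_sdiff.2 ⟨haW, haS⟩
      simp [hSfull] at this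
  · exfalso
    obtain ⟨x, hx, y, hy, hne, hcomp⟩ := connIn_crossing hconn S hSW
      (Finset.nonempty_iff_ne_empty.2 hSempty) (Finset.nonempty_iff_ne_empty.2 hSfull)
    have hyW : y ∈ W := (Finset.mem_sdiff.1 hy).1
    have hyS : y ∉ S := (Finset.mem_sdiff.1 hy).2
    rcases Finset.mem_union.1 hx with hx1 | hx2
    · -- x ∈ A\B with x ∈ I(B)
      obtain ⟨hxAB, hxI⟩ := Finset.mem_filter.1 hx1
      have hxA := Finset.mem_sdiff.1 hxAB
      rcases Finset.mem_union.1 hyW with hy1 | hy2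
      · -- y ∈ A\B, y ∉ I(B) (since y ∉ S); both in A: incomparable
        have hyA := Finset.mem_sdiff.1 hy1
        exact hA (by exact_mod_cast hxA.1) (by exact_mod_cast hyA.1) hne
          (hcomp.resolve_right (fun h => (hA (by exact_mod_cast hyA.1)
            (by exact_mod_cast hxA.1) (Ne.symm hne) h)))
      · -- y ∈ B\A, y ∈ I(A) (since y ∉ S)
        have hyB := Finset.mem_sdiff.1 hy2
        have hyI : y ∈ genIdeal P A := by
          by_contra hyI
          exact hyS (Finset.mem_union.2 (Or.inr (Finset.mem_filter.2 ⟨hy2, hyI⟩)))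
        rcases hcomp with hle | hle
        · -- x ≤ y, y ≤ a' ∈ A : x ≤ a', x,a' ∈ A, x < a' contradiction
          obtain ⟨a', ha', hya'⟩ := mem_genIdeal.1 hyI
          have hxa' : x ≤ a' := le_trans hle hya'
          have : x = a' := antichainF_eq_of_le hA hxA.1 ha' hxa'
          subst this
          exact hyB.2 (le_antisymm hya' hle ▸ hxA.1)
        · -- y ≤ x, x ≤ b' ∈ B: y ≤ b', y,b' ∈ B
          obtain ⟨b', hb', hxb'⟩ := mem_genIdeal.1 hxI
          have hyb' : y ≤ b' := le_trans hle hxb'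
          have : y = b' := antichainF_eq_of_le hB hyB.1 hb' hyb'
          subst this
          exact hxA.2 (le_antisymm hxb' hle ▸ hyB.1)
    · -- x ∈ B\A with x ∉ I(A)
      obtain ⟨hxBA, hxI⟩ := Finset.mem_filter.1 hx2
      have hxB := Finset.mem_sdiff.1 hxBA
      rcases Finset.mem_union.1 hyW with hy1 | hy2
      · -- y ∈ A\B, y ∉ I(B)
        have hyA := Finset.mem_sdiff.1 hy1
        have hyI : y ∉ genIdeal P B := by
          intro hyI
          exact hyS (Finset.mem_union.2 (Or.inl (Finset.mem_filter.2 ⟨hy1, hyI⟩)))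
        rcases hcomp with hle | hle
        · -- x ≤ y ∈ A: x ∈ I(A), contradiction
          exact hxI (mem_genIdeal.2 ⟨y, hyA.1, hle⟩)
        · -- y ≤ x ∈ B: y ∈ I(B), contradiction
          exact hyI (mem_genIdeal.2 ⟨x, hxB.1, hle⟩)
      · -- y ∈ B\A, both in B: incomparable
        have hyB := Finset.mem_sdiff.1 hy2
        exact hB (by exact_mod_cast hxB.1) (by exact_mod_cast hyB.1) hne
          (hcomp.resolve_right (fun h => (hB (by exact_mod_cast hyB.1)
            (by exact_mod_cast hxB.1) (Ne.symm hne) h)))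

lemma antichain_eq_of_genIdeal_eq {A B : Finset P} (hA : IsAntichainF P A)
    (hB : IsAntichainF P B) (h1 : genIdeal P A ⊆ genIdeal P B)
    (h2 : genIdeal P B ⊆ genIdeal P A) : A = B := by
  have key : ∀ (X Y : Finset P), IsAntichainF P X → IsAntichainF P Y →
      genIdeal P X ⊆ genIdeal P Y → genIdeal P Y ⊆ genIdeal P X → X ⊆ Y := by
    intro X Y hX hY hXY hYX a ha
    obtain ⟨b, hb, hab⟩ := mem_genIdeal.1 (hXY (subset_genIdeal ha))
    obtain ⟨a', ha', hba'⟩ := mem_genIdeal.1 (hYX (subset_genIdeal hb))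
    have : a = a' := antichainF_eq_of_le hX ha ha' (le_trans hab hba')
    subst this
    have : a = b := le_antisymm hab hba'
    exact this ▸ hb
  exact Finset.Subset.antisymm (key A B hA hB h1 h2) (key B A hB hA h2 h1)

end Aux2
section Core

variable {P : Type*} [Fintype P] [PartialOrder P]

open scoped Classical

lemma noComp {X : Finset P} (hX : IsAntichainF P X) {x y : P} (hx : x ∈ X) (hy : y ∈ X)
    (hne : x ≠ y) (h : x ≤ y ∨ y ≤ x) : False := by
  rcases h with h | h
  · exact hX (by exact_mod_cast hx) (by exact_mod_cast hy) hne h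
  · exact hX (by exact_mod_cast hy) (by exact_mod_cast hx) (Ne.symm hne) h

lemma le_of_ideal_le {A B : Finset P} (hB : IsAntichainF P B)
    (n : genIdeal P A ⊆ genIdeal P B) {a b : P} (ha : a ∈ A) (hb : b ∈ B)
    (h : a ≤ b ∨ b ≤ a) : a ≤ b := by
  rcases h with h | h
  · exact h
  · obtain ⟨b', hb', hab'⟩ := mem_genIdeal.1 (n (subset_genIdeal ha))
    have hbb' : b = b' := antichainF_eq_of_le hB hb hb' (le_trans h hab')
    subst hbb'
    exact hab'

lemma symmdiff_nonempty {A B : Finset P} (h : A ≠ B) : ((A \ B) ∪ (B \ A)).Nonempty := by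
  by_contra hc
  rw [Finset.not_nonempty_iff_eq_empty, Finset.union_eq_empty] at hc
  exact h (Finset.Subset.antisymm
    (fun x hx => by_contra fun hxB => (Finset.eq_empty_iff_forall_notMem.1 hc.1) x
      (Finset.mem_sdiff.2 ⟨hx, hxB⟩))
    (fun x hx => by_contra fun hxA => (Finset.eq_empty_iff_forall_notMem.1 hc.2) x
      (Finset.mem_sdiff.2 ⟨hx, hxA⟩)))

lemma lemmaL_core {A B C D : Finset P}
    (hA : IsAntichainF P A) (hB : IsAntichainF P B) (hC : IsAntichainF P C)
    (hD : IsAntichainF P D)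
    (hABne : A ≠ B) (hBCne : B ≠ C) (hCAne : C ≠ A)
    (cAB : ConnIn P (↑((A \ B) ∪ (B \ A)) : Set P))
    (cBC : ConnIn P (↑((B \ C) ∪ (C \ B)) : Set P))
    (cCA : ConnIn P (↑((C \ A) ∪ (A \ C)) : Set P))
    (nAB : genIdeal P A ⊆ genIdeal P B) (nBC : genIdeal P B ⊆ genIdeal P C)
    (hDU : ∀ x ∈ D, x ∈ A ∨ x ∈ B ∨ x ∈ C)
    (hit : ∀ a ∈ A, ∀ b ∈ B, ∀ c ∈ C, (a ≤ b ∨ b ≤ a) → (b ≤ c ∨ c ≤ b) →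
      (a ≤ c ∨ c ≤ a) → (a ∈ D ∨ b ∈ D ∨ c ∈ D)) :
    D = A ∨ D = B ∨ D = C := by
  classical
  have nAC : genIdeal P A ⊆ genIdeal P C := fun x hx => nBC (nAB hx)
  have ordAB : ∀ {a b : P}, a ∈ A → b ∈ B → (a ≤ b ∨ b ≤ a) → a ≤ b :=
    fun ha hb h => le_of_ideal_le hB nAB ha hb h
  have ordBC : ∀ {b c : P}, b ∈ B → c ∈ C → (b ≤ c ∨ c ≤ b) → b ≤ c :=
    fun hb hc h => le_of_ideal_le hC nBC hb hc h
  have ordAC : ∀ {a c : P}, a ∈ A → c ∈ C → (a ≤ c ∨ c ≤ a) → a ≤ c :=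
    fun ha hc h => le_of_ideal_le hC nAC ha hc h
  have ACsub : ∀ {x : P}, x ∈ A → x ∈ C → x ∈ B := by
    intro x hxA hxC
    obtain ⟨b, hb, hxb⟩ := mem_genIdeal.1 (nAB (subset_genIdeal hxA))
    obtain ⟨c, hc, hbc⟩ := mem_genIdeal.1 (nBC (subset_genIdeal hb))
    have hxc : x = c := antichainF_eq_of_le hC hxC hc (le_trans hxb hbc)
    subst hxc
    have hxb' : x = b := le_antisymm hxb hbc
    exact hxb' ▸ hb
  have TsubD : ∀ {x : P}, x ∈ A → x ∈ B → x ∈ C → x ∈ D := by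
    intro x hxA hxB hxC
    rcases hit x hxA x hxB x hxC (Or.inl le_rfl) (Or.inl le_rfl) (Or.inl le_rfl) with
      h | h | h <;> exact h
  have R1 : ∀ {p z : P}, p ∈ A → p ∈ B → z ∈ C → (p ≤ z ∨ z ≤ p) → p ∈ D ∨ z ∈ D := by
    intro p z hpA hpB hzC hcomp
    rcases hit p hpA p hpB z hzC (Or.inl le_rfl) hcomp hcomp with h | h | h
    · exact Or.inl h
    · exact Or.inl h
    · exact Or.inr h
  have R3 : ∀ {u q : P}, u ∈ A → q ∈ B → q ∈ C → (u ≤ q ∨ q ≤ u) → u ∈ D ∨ q ∈ D := by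
    intro u q huA hqB hqC hcomp
    rcases hit u huA q hqB q hqC hcomp (Or.inl le_rfl) hcomp with h | h | h
    · exact Or.inl h
    · exact Or.inr h
    · exact Or.inr h
  have hitT : ∀ {u v z : P}, u ∈ A → v ∈ B → z ∈ C → u ≤ v → v ≤ z →
      (u ∈ D ∨ v ∈ D ∨ z ∈ D) :=
    fun hu hv hz h1 h2 => hit _ hu _ hv _ hz (Or.inl h1) (Or.inl h2)
      (Or.inl (le_trans h1 h2))
  -- ########## notPQ ##########
  have notPQ : ∀ {y : P}, y ∈ B → y ∉ A → y ∉ C → y ∉ D →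
      ∀ {x : P}, x ∈ C → x ∈ D → (y ≤ x ∨ x ≤ y) →
      ∀ {z : P}, z ∈ C → z ∉ D → (y ≤ z ∨ z ≤ y) → False := by
    intro y hyB hyA hyC hyD x hxC hxD hcompx z hzC hzD hcompz
    have hyx : y ≤ x := ordBC hyB hxC hcompx
    have hyz : y ≤ z := ordBC hyB hzC hcompz
    have hyxne : y ≠ x := fun h => hyD (h ▸ hxD)
    have iso : ∀ u ∈ A, ¬ (u ≤ y ∨ y ≤ u) := by
      intro u huA hcomp
      have huy : u ≤ y := ordAB huA hyB hcomp
      by_cases huD : u ∈ D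
      · by_cases hux' : u = x
        · subst hux'
          exact noComp hB hyB (ACsub huA hxC) hyxne (Or.inl hyx)
        · exact noComp hD huD hxD hux' (Or.inl (le_trans huy hyx))
      · rcases hitT huA hyB hzC huy hyz with h | h | h
        · exact huD h
        · exact hyD h
        · exact hzD h
    have hyW : y ∈ (A \ B) ∪ (B \ A) :=
      Finset.mem_union.2 (Or.inr (Finset.mem_sdiff.2 ⟨hyB, hyA⟩))
    -- connectivity forces A△B = {y}
    have hWy : (A \ B) ∪ (B \ A) ⊆ {y} := by
      by_contra hc
      have hne : (((A \ B) ∪ (B \ A)) \ {y}).Nonempty := Finset.sdiff_nonempty.2 hc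
      obtain ⟨s, hs, t, ht, hnst, hcomp⟩ := connIn_crossing cAB {y}
        (Finset.singleton_subset_iff.2 hyW) ⟨y, Finset.mem_singleton_self y⟩ hne
      have hsy : s = y := Finset.mem_singleton.1 hs
      subst hsy
      have htW := (Finset.mem_sdiff.1 ht).1
      rcases Finset.mem_union.1 htW with h1 | h1
      · exact iso t (Finset.mem_sdiff.1 h1).1 (Or.symm hcomp)
      · exact noComp hB hyB (Finset.mem_sdiff.1 h1).1 hnst hcomp
    have hAsubB : A ⊆ B := by
      intro a ha
      by_contra haB
      have : a ∈ (A \ B) ∪ (B \ A) :=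
        Finset.mem_union.2 (Or.inl (Finset.mem_sdiff.2 ⟨ha, haB⟩))
      have := Finset.mem_singleton.1 (hWy this)
      subst this
      exact hyA ha
    -- x, z ∉ A
    have hxA : x ∉ A := by
      intro hxA
      exact noComp hB hyB (ACsub hxA hxC) hyxne (Or.inl hyx)
    have hzA : z ∉ A := by
      intro hzA
      have hyzne : y ≠ z := fun h => hyC (h ▸ hzC)
      exact noComp hB hyB (ACsub hzA hzC) hyzne (Or.inl hyz)
    -- split W₃ = (C\A) ∪ (A\C) with S₃ = (C\A ∩ D) ∪ (A\C \ D)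
    set S₃ : Finset P := ((C \ A).filter (fun w => w ∈ D)) ∪
      ((A \ C).filter (fun w => w ∉ D)) with hS₃def
    have hS₃W : S₃ ⊆ (C \ A) ∪ (A \ C) := by
      intro w hw
      rcases Finset.mem_union.1 hw with h | h
      · exact Finset.mem_union.2 (Or.inl (Finset.mem_of_mem_filter _ h))
      · exact Finset.mem_union.2 (Or.inr (Finset.mem_of_mem_filter _ h))
    have hxS₃ : x ∈ S₃ := Finset.mem_union.2 (Or.inl (Finset.mem_filter.2
      ⟨Finset.mem_sdiff.2 ⟨hxC, hxA⟩, hxD⟩))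
    have hzS₃ : z ∈ ((C \ A) ∪ (A \ C)) \ S₃ := by
      refine Finset.mem_sdiff.2 ⟨Finset.mem_union.2 (Or.inl (Finset.mem_sdiff.2 ⟨hzC, hzA⟩)), ?_⟩
      intro hc
      rcases Finset.mem_union.1 hc with h | h
      · exact hzD (Finset.mem_filter.1 h).2
      · exact (Finset.mem_sdiff.1 (Finset.mem_filter.1 h).1).2 hzC
    obtain ⟨s, hs, t, ht, hnst, hcomp⟩ := connIn_crossing cCA S₃ hS₃W ⟨x, hxS₃⟩ ⟨z, hzS₃⟩
    have htW := (Finset.mem_sdiff.1 ht).1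
    have htS := (Finset.mem_sdiff.1 ht).2
    -- decompose t
    have htcase : (t ∈ C ∧ t ∉ A ∧ t ∉ D) ∨ (t ∈ A ∧ t ∉ C ∧ t ∈ D) := by
      rcases Finset.mem_union.1 htW with h | h
      · have h' := Finset.mem_sdiff.1 h
        refine Or.inl ⟨h'.1, h'.2, ?_⟩
        intro htD
        exact htS (Finset.mem_union.2 (Or.inl (Finset.mem_filter.2 ⟨h, htD⟩)))
      · have h' := Finset.mem_sdiff.1 h
        refine Or.inr ⟨h'.1, h'.2, ?_⟩
        by_contra htD
        exact htS (Finset.mem_union.2 (Or.inr (Finset.mem_filter.2 ⟨h, htD⟩)))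
    rcases Finset.mem_union.1 hs with hs1 | hs1
    · -- s ∈ C\A ∩ D
      obtain ⟨hsCA, hsD⟩ := Finset.mem_filter.1 hs1
      have hsC := (Finset.mem_sdiff.1 hsCA).1
      rcases htcase with ⟨htC, htA, htD⟩ | ⟨htA, htC, htD⟩
      · exact noComp hC hsC htC hnst hcomp
      · exact noComp hD hsD htD hnst hcomp
    · -- s ∈ A\C, s ∉ D
      obtain ⟨hsAC, hsD⟩ := Finset.mem_filter.1 hs1
      have hsA := (Finset.mem_sdiff.1 hsAC).1
      rcases htcase with ⟨htC, htA, htD⟩ | ⟨htA, htC, htD⟩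
      · -- R1 on s (∈ A ⊆ B) and t ∈ C
        rcases R1 hsA (hAsubB hsA) htC hcomp with h | h
        · exact hsD h
        · exact htD h
      · exact noComp hA hsA htA hnst hcomp
  -- ########## CORE* ##########
  have coreStar : ∀ {u v : P}, u ∈ A → u ∉ B → u ∉ D → v ∈ B → v ∉ A → v ∉ C → v ∉ D →
      (u ≤ v ∨ v ≤ u) → ∀ {z : P}, z ∈ C → z ∉ B → z ∉ D → False := by
    intro u v huA huB huD hvB hvA hvC hvD hcompuv z hzC hzB hzD
    have huv : u ≤ v := ordAB huA hvB hcompuv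
    have Phi : P → Prop := fun w => ∀ z' ∈ C, (w ≤ z' ∨ z' ≤ w) → z' ∈ D
    have PhiV : ∀ z' ∈ C, (v ≤ z' ∨ z' ≤ v) → z' ∈ D := by
      intro z' hz' hcomp
      by_contra hz'D
      have hvz' : v ≤ z' := ordBC hvB hz' hcomp
      rcases hitT huA hvB hz' huv hvz' with h | h | h
      · exact huD h
      · exact hvD h
      · exact hz'D h
    set S₂ : Finset P := ((B \ C).filter (fun w => ∀ z' ∈ C, (w ≤ z' ∨ z' ≤ w) → z' ∈ D)) ∪
      ((C \ B).filter (fun w => w ∈ D)) with hS₂def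
    have hS₂W : S₂ ⊆ (B \ C) ∪ (C \ B) := by
      intro w hw
      rcases Finset.mem_union.1 hw with h | h
      · exact Finset.mem_union.2 (Or.inl (Finset.mem_of_mem_filter _ h))
      · exact Finset.mem_union.2 (Or.inr (Finset.mem_of_mem_filter _ h))
    have hvS₂ : v ∈ S₂ := Finset.mem_union.2 (Or.inl (Finset.mem_filter.2
      ⟨Finset.mem_sdiff.2 ⟨hvB, hvC⟩, PhiV⟩))
    have hzS₂ : z ∈ ((B \ C) ∪ (C \ B)) \ S₂ := by
      refine Finset.mem_sdiff.2 ⟨Finset.mem_union.2 (Or.inr (Finset.mem_sdiff.2 ⟨hzC, hzB⟩)), ?_⟩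
      intro hc
      rcases Finset.mem_union.1 hc with h | h
      · exact hzB (Finset.mem_sdiff.1 (Finset.mem_filter.1 h).1).1
      · exact hzD (Finset.mem_filter.1 h).2
    obtain ⟨s, hs, t, ht, hnst, hcomp⟩ := connIn_crossing cBC S₂ hS₂W ⟨v, hvS₂⟩ ⟨z, hzS₂⟩
    have htW := (Finset.mem_sdiff.1 ht).1
    have htS := (Finset.mem_sdiff.1 ht).2
    have htcase : (t ∈ B ∧ t ∉ C ∧ ∃ z' ∈ C, (t ≤ z' ∨ z' ≤ t) ∧ z' ∉ D) ∨
        (t ∈ C ∧ t ∉ B ∧ t ∉ D) := by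
      rcases Finset.mem_union.1 htW with h | h
      · have h' := Finset.mem_sdiff.1 h
        refine Or.inl ⟨h'.1, h'.2, ?_⟩
        by_contra hc
        push_neg at hc
        exact htS (Finset.mem_union.2 (Or.inl (Finset.mem_filter.2 ⟨h, hc⟩)))
      · have h' := Finset.mem_sdiff.1 h
        refine Or.inr ⟨h'.1, h'.2, ?_⟩
        intro htD
        exact htS (Finset.mem_union.2 (Or.inr (Finset.mem_filter.2 ⟨h, htD⟩)))
    rcases Finset.mem_union.1 hs with hs1 | hs1
    · -- s ∈ B\C with Phi s
      obtain ⟨hsBC, hsPhi⟩ := Finset.mem_filter.1 hs1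
      have hsB := (Finset.mem_sdiff.1 hsBC).1
      rcases htcase with ⟨htB, htC, _⟩ | ⟨htC, htB, htD⟩
      · exact noComp hB hsB htB hnst hcomp
      · exact htD (hsPhi t htC hcomp)
    · -- s ∈ C\B ∩ D
      obtain ⟨hsCB, hsD⟩ := Finset.mem_filter.1 hs1
      have hsC := (Finset.mem_sdiff.1 hsCB).1
      have hsB := (Finset.mem_sdiff.1 hsCB).2
      rcases htcase with ⟨htB, htC, z', hz'C, hz'comp, hz'D⟩ | ⟨htC, htB, htD⟩
      · -- t ∈ B\C, not Phi: apply notPQ with y := t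
        have htD : t ∉ D := fun htD => noComp hD htD hsD (Ne.symm hnst) (Or.symm hcomp)
        have htA : t ∉ A := by
          intro htA
          rcases R1 htA htB hz'C hz'comp with h | h
          · exact htD h
          · exact hz'D h
        exact notPQ htB htA htC htD hsC hsD (Or.symm hcomp) hz'C hz'D hz'comp
      · exact noComp hC hsC htC hnst hcomp
  -- ########## trichotomies ##########
  -- pair (A,B)
  have trichAB : ((∀ x ∈ A \ B, x ∈ D) ∧ (∀ x ∈ B \ A, x ∉ D)) ∨
      ((∀ x ∈ B \ A, x ∈ D) ∧ (∀ x ∈ A \ B, x ∉ D)) ∨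
      (∃ u, u ∈ A ∧ u ∉ B ∧ u ∉ D ∧ ∃ v, v ∈ B ∧ v ∉ A ∧ v ∉ C ∧ v ∉ D ∧
        (u ≤ v ∨ v ≤ u)) := by
    set S₁ : Finset P := ((A \ B).filter (fun w => w ∈ D)) ∪
      ((B \ A).filter (fun w => w ∉ D)) with hS₁def
    have hS₁W : S₁ ⊆ (A \ B) ∪ (B \ A) := by
      intro w hw
      rcases Finset.mem_union.1 hw with h | h
      · exact Finset.mem_union.2 (Or.inl (Finset.mem_of_mem_filter _ h))
      · exact Finset.mem_union.2 (Or.inr (Finset.mem_of_mem_filter _ h))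
    by_cases hS₁e : S₁ = ∅
    · -- M-B
      refine Or.inr (Or.inl ⟨?_, ?_⟩)
      · intro w hw
        by_contra hwD
        have : w ∈ S₁ := Finset.mem_union.2 (Or.inr (Finset.mem_filter.2 ⟨hw, hwD⟩))
        simp [hS₁e] at this
      · intro w hw hwD
        have : w ∈ S₁ := Finset.mem_union.2 (Or.inl (Finset.mem_filter.2 ⟨hw, hwD⟩))
        simp [hS₁e] at this
    by_cases hS₁f : ((A \ B) ∪ (B \ A)) \ S₁ = ∅
    · -- M-A
      have hfull : ∀ w ∈ (A \ B) ∪ (B \ A), w ∈ S₁ := by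
        intro w hw
        by_contra hwS
        have : w ∈ ((A \ B) ∪ (B \ A)) \ S₁ := Finset.mem_sdiff.2 ⟨hw, hwS⟩
        simp [hS₁f] at this
      refine Or.inl ⟨?_, ?_⟩
      · intro w hw
        have := hfull w (Finset.mem_union.2 (Or.inl hw))
        rcases Finset.mem_union.1 this with h | h
        · exact (Finset.mem_filter.1 h).2
        · exact absurd (Finset.mem_sdiff.1 (Finset.mem_filter.1 h).1).1
            (Finset.mem_sdiff.1 hw).2
      · intro w hw hwD
        have := hfull w (Finset.mem_union.2 (Or.inr hw))
        rcases Finset.mem_union.1 this with h | h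
        · exact (Finset.mem_sdiff.1 hw).2 (Finset.mem_sdiff.1 (Finset.mem_filter.1 h).1).1
        · exact (Finset.mem_filter.1 h).2 hwD
    · -- crossing: GAP₁
      obtain ⟨s, hs, t, ht, hnst, hcomp⟩ := connIn_crossing cAB S₁ hS₁W
        (Finset.nonempty_iff_ne_empty.2 hS₁e) (Finset.nonempty_iff_ne_empty.2 hS₁f)
      have htW := (Finset.mem_sdiff.1 ht).1
      have htS := (Finset.mem_sdiff.1 ht).2
      have htcase : (t ∈ A ∧ t ∉ B ∧ t ∉ D) ∨ (t ∈ B ∧ t ∉ A ∧ t ∈ D) := by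
        rcases Finset.mem_union.1 htW with h | h
        · have h' := Finset.mem_sdiff.1 h
          refine Or.inl ⟨h'.1, h'.2, fun htD => htS (Finset.mem_union.2 (Or.inl
            (Finset.mem_filter.2 ⟨h, htD⟩)))⟩
        · have h' := Finset.mem_sdiff.1 h
          refine Or.inr ⟨h'.1, h'.2, by_contra fun htD => htS (Finset.mem_union.2 (Or.inr
            (Finset.mem_filter.2 ⟨h, htD⟩)))⟩
      rcases Finset.mem_union.1 hs with hs1 | hs1
      · obtain ⟨hsAB, hsD⟩ := Finset.mem_filter.1 hs1
        have hsA := (Finset.mem_sdiff.1 hsAB).1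
        rcases htcase with ⟨htA, htB, htD⟩ | ⟨htB, htA, htD⟩
        · exact absurd hcomp (fun h => noComp hA hsA htA hnst h)
        · exact absurd hcomp (fun h => noComp hD hsD htD hnst h)
      · obtain ⟨hsBA, hsD⟩ := Finset.mem_filter.1 hs1
        have hsB := (Finset.mem_sdiff.1 hsBA).1
        have hsA := (Finset.mem_sdiff.1 hsBA).2
        rcases htcase with ⟨htA, htB, htD⟩ | ⟨htB, htA, htD⟩
        · -- gap pair (t, s) unless s ∈ C
          by_cases hsC : s ∈ C
          · rcases R3 htA hsB hsC (Or.symm hcomp) with h | h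
            · exact absurd h htD
            · exact absurd h hsD
          · exact Or.inr (Or.inr ⟨t, htA, htB, htD, s, hsB, hsA, hsC, hsD, Or.symm hcomp⟩)
        · exact absurd hcomp (fun h => noComp hB hsB htB hnst h)
  -- pair (B,C)
  have trichBC : ((∀ x ∈ B \ C, x ∈ D) ∧ (∀ x ∈ C \ B, x ∉ D)) ∨
      ((∀ x ∈ C \ B, x ∈ D) ∧ (∀ x ∈ B \ C, x ∉ D)) ∨
      (∃ v, v ∈ B ∧ v ∉ A ∧ v ∉ C ∧ v ∉ D ∧ ∃ z, z ∈ C ∧ z ∉ B ∧ z ∉ D ∧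
        (v ≤ z ∨ z ≤ v)) := by
    set S₁ : Finset P := ((B \ C).filter (fun w => w ∈ D)) ∪
      ((C \ B).filter (fun w => w ∉ D)) with hS₁def
    have hS₁W : S₁ ⊆ (B \ C) ∪ (C \ B) := by
      intro w hw
      rcases Finset.mem_union.1 hw with h | h
      · exact Finset.mem_union.2 (Or.inl (Finset.mem_of_mem_filter _ h))
      · exact Finset.mem_union.2 (Or.inr (Finset.mem_of_mem_filter _ h))
    by_cases hS₁e : S₁ = ∅
    · refine Or.inr (Or.inl ⟨?_, ?_⟩)
      · intro w hw
        by_contra hwD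
        have : w ∈ S₁ := Finset.mem_union.2 (Or.inr (Finset.mem_filter.2 ⟨hw, hwD⟩))
        simp [hS₁e] at this
      · intro w hw hwD
        have : w ∈ S₁ := Finset.mem_union.2 (Or.inl (Finset.mem_filter.2 ⟨hw, hwD⟩))
        simp [hS₁e] at this
    by_cases hS₁f : ((B \ C) ∪ (C \ B)) \ S₁ = ∅
    · have hfull : ∀ w ∈ (B \ C) ∪ (C \ B), w ∈ S₁ := by
        intro w hw
        by_contra hwS
        have : w ∈ ((B \ C) ∪ (C \ B)) \ S₁ := Finset.mem_sdiff.2 ⟨hw, hwS⟩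
        simp [hS₁f] at this
      refine Or.inl ⟨?_, ?_⟩
      · intro w hw
        have := hfull w (Finset.mem_union.2 (Or.inl hw))
        rcases Finset.mem_union.1 this with h | h
        · exact (Finset.mem_filter.1 h).2
        · exact absurd (Finset.mem_sdiff.1 (Finset.mem_filter.1 h).1).1
            (Finset.mem_sdiff.1 hw).2
      · intro w hw hwD
        have := hfull w (Finset.mem_union.2 (Or.inr hw))
        rcases Finset.mem_union.1 this with h | h
        · exact (Finset.mem_sdiff.1 hw).2 (Finset.mem_sdiff.1 (Finset.mem_filter.1 h).1).1
        · exact (Finset.mem_filter.1 h).2 hwD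
    · obtain ⟨s, hs, t, ht, hnst, hcomp⟩ := connIn_crossing cBC S₁ hS₁W
        (Finset.nonempty_iff_ne_empty.2 hS₁e) (Finset.nonempty_iff_ne_empty.2 hS₁f)
      have htW := (Finset.mem_sdiff.1 ht).1
      have htS := (Finset.mem_sdiff.1 ht).2
      have htcase : (t ∈ B ∧ t ∉ C ∧ t ∉ D) ∨ (t ∈ C ∧ t ∉ B ∧ t ∈ D) := by
        rcases Finset.mem_union.1 htW with h | h
        · have h' := Finset.mem_sdiff.1 h
          refine Or.inl ⟨h'.1, h'.2, fun htD => htS (Finset.mem_union.2 (Or.inl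
            (Finset.mem_filter.2 ⟨h, htD⟩)))⟩
        · have h' := Finset.mem_sdiff.1 h
          refine Or.inr ⟨h'.1, h'.2, by_contra fun htD => htS (Finset.mem_union.2 (Or.inr
            (Finset.mem_filter.2 ⟨h, htD⟩)))⟩
      rcases Finset.mem_union.1 hs with hs1 | hs1
      · obtain ⟨hsBC, hsD⟩ := Finset.mem_filter.1 hs1
        have hsB := (Finset.mem_sdiff.1 hsBC).1
        rcases htcase with ⟨htB, htC, htD⟩ | ⟨htC, htB, htD⟩
        · exact absurd hcomp (fun h => noComp hB hsB htB hnst h)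
        · exact absurd hcomp (fun h => noComp hD hsD htD hnst h)
      · obtain ⟨hsCB, hsD⟩ := Finset.mem_filter.1 hs1
        have hsC := (Finset.mem_sdiff.1 hsCB).1
        have hsB := (Finset.mem_sdiff.1 hsCB).2
        rcases htcase with ⟨htB, htC, htD⟩ | ⟨htC, htB, htD⟩
        · by_cases htA : t ∈ A
          · rcases R1 htA htB hsC (Or.symm hcomp) with h | h
            · exact absurd h htD
            · exact absurd h hsD
          · exact Or.inr (Or.inr ⟨t, htB, htA, htC, htD, s, hsC, hsB, hsD, Or.symm hcomp⟩)
        · exact absurd hcomp (fun h => noComp hC hsC htC hnst h)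
  -- pair (C,A)
  have trichCA : ((∀ x ∈ A \ C, x ∈ D) ∧ (∀ x ∈ C \ A, x ∉ D)) ∨
      ((∀ x ∈ C \ A, x ∈ D) ∧ (∀ x ∈ A \ C, x ∉ D)) ∨
      (∃ u, u ∈ A ∧ u ∉ B ∧ u ∉ C ∧ u ∉ D ∧ ∃ z, z ∈ C ∧ z ∉ A ∧ z ∉ B ∧ z ∉ D ∧
        (u ≤ z ∨ z ≤ u)) := by
    set S₁ : Finset P := ((A \ C).filter (fun w => w ∈ D)) ∪
      ((C \ A).filter (fun w => w ∉ D)) with hS₁def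
    have hS₁W : S₁ ⊆ (C \ A) ∪ (A \ C) := by
      intro w hw
      rcases Finset.mem_union.1 hw with h | h
      · exact Finset.mem_union.2 (Or.inr (Finset.mem_of_mem_filter _ h))
      · exact Finset.mem_union.2 (Or.inl (Finset.mem_of_mem_filter _ h))
    by_cases hS₁e : S₁ = ∅
    · refine Or.inr (Or.inl ⟨?_, ?_⟩)
      · intro w hw
        by_contra hwD
        have : w ∈ S₁ := Finset.mem_union.2 (Or.inr (Finset.mem_filter.2 ⟨hw, hwD⟩))
        simp [hS₁e] at this
      · intro w hw hwD
        have : w ∈ S₁ := Finset.mem_union.2 (Or.inl (Finset.mem_filter.2 ⟨hw, hwD⟩))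
        simp [hS₁e] at this
    by_cases hS₁f : ((C \ A) ∪ (A \ C)) \ S₁ = ∅
    · have hfull : ∀ w ∈ (C \ A) ∪ (A \ C), w ∈ S₁ := by
        intro w hw
        by_contra hwS
        have : w ∈ ((C \ A) ∪ (A \ C)) \ S₁ := Finset.mem_sdiff.2 ⟨hw, hwS⟩
        simp [hS₁f] at this
      refine Or.inl ⟨?_, ?_⟩
      · intro w hw
        have := hfull w (Finset.mem_union.2 (Or.inr hw))
        rcases Finset.mem_union.1 this with h | h
        · exact (Finset.mem_filter.1 h).2
        · exact absurd (Finset.mem_sdiff.1 (Finset.mem_filter.1 h).1).1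
            (Finset.mem_sdiff.1 hw).2
      · intro w hw hwD
        have := hfull w (Finset.mem_union.2 (Or.inl hw))
        rcases Finset.mem_union.1 this with h | h
        · exact (Finset.mem_sdiff.1 hw).2 (Finset.mem_sdiff.1 (Finset.mem_filter.1 h).1).1
        · exact (Finset.mem_filter.1 h).2 hwD
    · obtain ⟨s, hs, t, ht, hnst, hcomp⟩ := connIn_crossing cCA S₁ hS₁W
        (Finset.nonempty_iff_ne_empty.2 hS₁e) (Finset.nonempty_iff_ne_empty.2 hS₁f)
      have htW := (Finset.mem_sdiff.1 ht).1
      have htS := (Finset.mem_sdiff.1 ht).2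
      have htcase : (t ∈ A ∧ t ∉ C ∧ t ∉ D) ∨ (t ∈ C ∧ t ∉ A ∧ t ∈ D) := by
        rcases Finset.mem_union.1 htW with h | h
        · have h' := Finset.mem_sdiff.1 h
          refine Or.inr ⟨h'.1, h'.2, by_contra fun htD => htS (Finset.mem_union.2 (Or.inr
            (Finset.mem_filter.2 ⟨h, htD⟩)))⟩
        · have h' := Finset.mem_sdiff.1 h
          refine Or.inl ⟨h'.1, h'.2, fun htD => htS (Finset.mem_union.2 (Or.inl
            (Finset.mem_filter.2 ⟨h, htD⟩)))⟩
      rcases Finset.mem_union.1 hs with hs1 | hs1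
      · obtain ⟨hsAC, hsD⟩ := Finset.mem_filter.1 hs1
        have hsA := (Finset.mem_sdiff.1 hsAC).1
        rcases htcase with ⟨htA, htC, htD⟩ | ⟨htC, htA, htD⟩
        · exact absurd hcomp (fun h => noComp hA hsA htA hnst h)
        · exact absurd hcomp (fun h => noComp hD hsD htD hnst h)
      · obtain ⟨hsCA, hsD⟩ := Finset.mem_filter.1 hs1
        have hsC := (Finset.mem_sdiff.1 hsCA).1
        have hsA := (Finset.mem_sdiff.1 hsCA).2
        rcases htcase with ⟨htA, htC, htD⟩ | ⟨htC, htA, htD⟩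
        · by_cases htB : t ∈ B
          · rcases R1 htA htB hsC (Or.symm hcomp) with h | h
            · exact absurd h htD
            · exact absurd h hsD
          · by_cases hsB : s ∈ B
            · rcases R3 htA hsB hsC (Or.symm hcomp) with h | h
              · exact absurd h htD
              · exact absurd h hsD
            · exact Or.inr (Or.inr ⟨t, htA, htB, htC, htD, s, hsC, hsA, hsB, hsD, Or.symm hcomp⟩)
        · exact absurd hcomp (fun h => noComp hC hsC htC hnst h)
  -- ########## helpers ##########
  have helperA : (∀ x ∈ A \ B, x ∈ D) → (∀ x ∈ B \ A, x ∉ D) →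
      (∀ x ∈ A \ C, x ∈ D) → (∀ x ∈ C \ A, x ∉ D) → D = A := by
    intro h1 h2 h3 h4
    apply Finset.ext
    intro w
    constructor
    · intro hwD
      by_contra hwA
      rcases hDU w hwD with h | h | h
      · exact hwA h
      · exact h2 w (Finset.mem_sdiff.2 ⟨h, hwA⟩) hwD
      · exact h4 w (Finset.mem_sdiff.2 ⟨h, hwA⟩) hwD
    · intro hwA
      by_cases hwB : w ∈ B
      · by_cases hwC : w ∈ C
        · exact TsubD hwA hwB hwC
        · exact h3 w (Finset.mem_sdiff.2 ⟨hwA, hwC⟩)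
      · exact h1 w (Finset.mem_sdiff.2 ⟨hwA, hwB⟩)
  have helperB : (∀ x ∈ B \ A, x ∈ D) → (∀ x ∈ A \ B, x ∉ D) →
      (∀ x ∈ B \ C, x ∈ D) → (∀ x ∈ C \ B, x ∉ D) → D = B := by
    intro h1 h2 h3 h4
    apply Finset.ext
    intro w
    constructor
    · intro hwD
      by_contra hwB
      rcases hDU w hwD with h | h | h
      · exact h2 w (Finset.mem_sdiff.2 ⟨h, hwB⟩) hwD
      · exact hwB h
      · exact h4 w (Finset.mem_sdiff.2 ⟨h, hwB⟩) hwD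
    · intro hwB
      by_cases hwA : w ∈ A
      · by_cases hwC : w ∈ C
        · exact TsubD hwA hwB hwC
        · exact h3 w (Finset.mem_sdiff.2 ⟨hwB, hwC⟩)
      · exact h1 w (Finset.mem_sdiff.2 ⟨hwB, hwA⟩)
  have helperC : (∀ x ∈ C \ B, x ∈ D) → (∀ x ∈ B \ C, x ∉ D) →
      (∀ x ∈ C \ A, x ∈ D) → (∀ x ∈ A \ C, x ∉ D) → D = C := by
    intro h1 h2 h3 h4
    apply Finset.ext
    intro w
    constructor
    · intro hwD
      by_contra hwC
      rcases hDU w hwD with h | h | h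
      · exact h4 w (Finset.mem_sdiff.2 ⟨h, hwC⟩) hwD
      · exact h2 w (Finset.mem_sdiff.2 ⟨h, hwC⟩) hwD
      · exact hwC h
    · intro hwC
      by_cases hwB : w ∈ B
      · by_cases hwA : w ∈ A
        · exact TsubD hwA hwB hwC
        · exact h3 w (Finset.mem_sdiff.2 ⟨hwC, hwA⟩)
      · exact h1 w (Finset.mem_sdiff.2 ⟨hwC, hwB⟩)
  -- ########## endgame ##########
  rcases trichAB with ⟨a1, a2⟩ | ⟨b1, b2⟩ | ⟨u, huA, huB, huD, v, hvB, hvA, hvC, hvD, huv⟩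
  · -- M-A
    rcases trichBC with ⟨p1, p2⟩ | ⟨q1, q2⟩ | ⟨v, hvB, hvA, hvC, hvD, z, hzC, hzB, hzD, hvz⟩
    · -- (a, b'): D = A
      refine Or.inl (helperA a1 a2 ?_ ?_)
      · intro x hx
        have hx' := Finset.mem_sdiff.1 hx
        by_cases hxB : x ∈ B
        · exact p1 x (Finset.mem_sdiff.2 ⟨hxB, hx'.2⟩)
        · exact a1 x (Finset.mem_sdiff.2 ⟨hx'.1, hxB⟩)
      · intro x hx hxD
        have hx' := Finset.mem_sdiff.1 hx
        by_cases hxB : x ∈ B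
        · exact a2 x (Finset.mem_sdiff.2 ⟨hxB, hx'.2⟩) hxD
        · exact p2 x (Finset.mem_sdiff.2 ⟨hx'.1, hxB⟩) hxD
    · -- (a, c')
      rcases trichCA with ⟨r1, r2⟩ | ⟨s1, s2⟩ | ⟨u, huA, huB, huC, huD, z, hzC, hzA, hzB, hzD, huz⟩
      · exact Or.inl (helperA a1 a2 r1 r2)
      · exact Or.inr (Or.inr (helperC q1 q2 s1 s2))
      · exact absurd (a1 u (Finset.mem_sdiff.2 ⟨huA, huB⟩)) huD
    · -- (a, g₂)
      rcases trichCA with ⟨r1, r2⟩ | ⟨s1, s2⟩ | ⟨u, huA, huB, huC, huD, z', hz'C, hz'A, hz'B, hz'D, huz'⟩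
      · exact Or.inl (helperA a1 a2 r1 r2)
      · -- (a, g₂, c'') : helperC via combo
        refine Or.inr (Or.inr (helperC ?_ ?_ s1 s2))
        · intro x hx
          have hx' := Finset.mem_sdiff.1 hx
          have hxA : x ∉ A := fun hxA => hx'.2 (ACsub hxA hx'.1)
          exact s1 x (Finset.mem_sdiff.2 ⟨hx'.1, hxA⟩)
        · intro x hx hxD
          have hx' := Finset.mem_sdiff.1 hx
          by_cases hxA : x ∈ A
          · exact s2 x (Finset.mem_sdiff.2 ⟨hxA, hx'.2⟩) hxD
          · exact a2 x (Finset.mem_sdiff.2 ⟨hx'.1, hxA⟩) hxD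
      · exact absurd (a1 u (Finset.mem_sdiff.2 ⟨huA, huB⟩)) huD
  · -- M-B
    rcases trichBC with ⟨p1, p2⟩ | ⟨q1, q2⟩ | ⟨v, hvB, hvA, hvC, hvD, z, hzC, hzB, hzD, hvz⟩
    · exact Or.inr (Or.inl (helperB b1 b2 p1 p2))
    · -- (b, c') : D = C
      refine Or.inr (Or.inr (helperC q1 q2 ?_ ?_))
      · intro x hx
        have hx' := Finset.mem_sdiff.1 hx
        by_cases hxB : x ∈ B
        · exact b1 x (Finset.mem_sdiff.2 ⟨hxB, hx'.2⟩)
        · exact q1 x (Finset.mem_sdiff.2 ⟨hx'.1, hxB⟩)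
      · intro x hx hxD
        have hx' := Finset.mem_sdiff.1 hx
        by_cases hxB : x ∈ B
        · exact q2 x (Finset.mem_sdiff.2 ⟨hxB, hx'.2⟩) hxD
        · exact b2 x (Finset.mem_sdiff.2 ⟨hx'.1, hxB⟩) hxD
    · -- (b, g₂): contradiction
      exact absurd (b1 v (Finset.mem_sdiff.2 ⟨hvB, hvA⟩)) hvD
  · -- GAP₁
    rcases trichBC with ⟨p1, p2⟩ | ⟨q1, q2⟩ | ⟨v', hv'B, hv'A, hv'C, hv'D, z, hzC, hzB, hzD, hv'z⟩
    · -- (g₁, b')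
      rcases trichCA with ⟨r1, r2⟩ | ⟨s1, s2⟩ | ⟨u', hu'A, hu'B, hu'C, hu'D, z', hz'C, hz'A, hz'B, hz'D, hu'z'⟩
      · -- (g₁, b', a''): u ∈ A\C ⊆ D contradiction
        have huC : u ∉ C := fun huC => huB (ACsub huA huC)
        exact absurd (r1 u (Finset.mem_sdiff.2 ⟨huA, huC⟩)) huD
      · -- (g₁, b', c''): helperB
        refine Or.inr (Or.inl (helperB ?_ ?_ p1 p2))
        · intro x hx
          have hx' := Finset.mem_sdiff.1 hx
          by_cases hxC : x ∈ C
          · exact s1 x (Finset.mem_sdiff.2 ⟨hxC, hx'.2⟩)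
          · exact p1 x (Finset.mem_sdiff.2 ⟨hx'.1, hxC⟩)
        · intro x hx hxD
          have hx' := Finset.mem_sdiff.1 hx
          have hxC : x ∉ C := fun hxC => hx'.2 (ACsub hx'.1 hxC)
          exact s2 x (Finset.mem_sdiff.2 ⟨hx'.1, hxC⟩) hxD
      · -- (g₁, b', g₃): CORE*
        exact absurd (coreStar huA huB huD hvB hvA hvC hvD huv hz'C hz'B hz'D) id
    · -- (g₁, c')
      rcases trichCA with ⟨r1, r2⟩ | ⟨s1, s2⟩ | ⟨u', hu'A, hu'B, hu'C, hu'D, z', hz'C, hz'A, hz'B, hz'D, hu'z'⟩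
      · have huC : u ∉ C := fun huC => huB (ACsub huA huC)
        exact absurd (r1 u (Finset.mem_sdiff.2 ⟨huA, huC⟩)) huD
      · exact Or.inr (Or.inr (helperC q1 q2 s1 s2))
      · exact absurd (coreStar huA huB huD hvB hvA hvC hvD huv hz'C hz'B hz'D) id
    · -- (g₁, g₂): CORE*
      exact absurd (coreStar huA huB huD hvB hvA hvC hvD huv hzC hzB hzD) id

end Core
section LemmaLGeneral

variable {P : Type*} [Fintype P] [PartialOrder P]

open scoped Classical

lemma connIn_congr {W W' : Finset P} (h : W = W') (hc : ConnIn P (↑W : Set P)) :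
    ConnIn P (↑W' : Set P) := h ▸ hc

set_option maxHeartbeats 1000000 in
/-- Lemma L in full generality (no nesting assumption). -/
lemma lemmaL {A B C D : Finset P}
    (hA : IsAntichainF P A) (hB : IsAntichainF P B) (hC : IsAntichainF P C)
    (hD : IsAntichainF P D)
    (hABne : A ≠ B) (hACne : A ≠ C) (hBCne : B ≠ C)
    (cAB : ConnIn P (↑((A \ B) ∪ (B \ A)) : Set P))
    (cBC : ConnIn P (↑((B \ C) ∪ (C \ B)) : Set P))
    (cCA : ConnIn P (↑((C \ A) ∪ (A \ C)) : Set P))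
    (hDU : ∀ x ∈ D, x ∈ A ∨ x ∈ B ∨ x ∈ C)
    (hit : ∀ a ∈ A, ∀ b ∈ B, ∀ c ∈ C, (a ≤ b ∨ b ≤ a) → (b ≤ c ∨ c ≤ b) →
      (a ≤ c ∨ c ≤ a) → (a ∈ D ∨ b ∈ D ∨ c ∈ D)) :
    D = A ∨ D = B ∨ D = C := by
  classical
  have cBA : ConnIn P (↑((B \ A) ∪ (A \ B)) : Set P) := connIn_congr (Finset.union_comm _ _) cAB
  have cCB : ConnIn P (↑((C \ B) ∪ (B \ C)) : Set P) := connIn_congr (Finset.union_comm _ _) cBC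
  have cAC : ConnIn P (↑((A \ C) ∪ (C \ A)) : Set P) := connIn_congr (Finset.union_comm _ _) cCA
  have hDU1 : ∀ x ∈ D, x ∈ A ∨ x ∈ C ∨ x ∈ B := by
    intro x hx; rcases hDU x hx with h | h | h <;> tauto
  have hDU2 : ∀ x ∈ D, x ∈ B ∨ x ∈ A ∨ x ∈ C := by
    intro x hx; rcases hDU x hx with h | h | h <;> tauto
  have hDU3 : ∀ x ∈ D, x ∈ B ∨ x ∈ C ∨ x ∈ A := by
    intro x hx; rcases hDU x hx with h | h | h <;> tauto
  have hDU4 : ∀ x ∈ D, x ∈ C ∨ x ∈ A ∨ x ∈ B := by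
    intro x hx; rcases hDU x hx with h | h | h <;> tauto
  have hDU5 : ∀ x ∈ D, x ∈ C ∨ x ∈ B ∨ x ∈ A := by
    intro x hx; rcases hDU x hx with h | h | h <;> tauto
  have hitACB : ∀ a ∈ A, ∀ c ∈ C, ∀ b ∈ B, (a ≤ c ∨ c ≤ a) → (c ≤ b ∨ b ≤ c) →
      (a ≤ b ∨ b ≤ a) → (a ∈ D ∨ c ∈ D ∨ b ∈ D) := by
    intro a ha c hc b hb h1 h2 h3
    rcases hit a ha b hb c hc h3 (Or.symm h2) h1 with h | h | h <;> tauto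
  have hitBAC : ∀ b ∈ B, ∀ a ∈ A, ∀ c ∈ C, (b ≤ a ∨ a ≤ b) → (a ≤ c ∨ c ≤ a) →
      (b ≤ c ∨ c ≤ b) → (b ∈ D ∨ a ∈ D ∨ c ∈ D) := by
    intro b hb a ha c hc h1 h2 h3
    rcases hit a ha b hb c hc (Or.symm h1) h3 h2 with h | h | h <;> tauto
  have hitBCA : ∀ b ∈ B, ∀ c ∈ C, ∀ a ∈ A, (b ≤ c ∨ c ≤ b) → (c ≤ a ∨ a ≤ c) →
      (b ≤ a ∨ a ≤ b) → (b ∈ D ∨ c ∈ D ∨ a ∈ D) := by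
    intro b hb c hc a ha h1 h2 h3
    rcases hit a ha b hb c hc (Or.symm h3) h1 (Or.symm h2) with h | h | h <;> tauto
  have hitCAB : ∀ c ∈ C, ∀ a ∈ A, ∀ b ∈ B, (c ≤ a ∨ a ≤ c) → (a ≤ b ∨ b ≤ a) →
      (c ≤ b ∨ b ≤ c) → (c ∈ D ∨ a ∈ D ∨ b ∈ D) := by
    intro c hc a ha b hb h1 h2 h3
    rcases hit a ha b hb c hc h2 (Or.symm h3) (Or.symm h1) with h | h | h <;> tauto
  have hitCBA : ∀ c ∈ C, ∀ b ∈ B, ∀ a ∈ A, (c ≤ b ∨ b ≤ c) → (b ≤ a ∨ a ≤ b) →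
      (c ≤ a ∨ a ≤ c) → (c ∈ D ∨ b ∈ D ∨ a ∈ D) := by
    intro c hc b hb a ha h1 h2 h3
    rcases hit a ha b hb c hc (Or.symm h2) (Or.symm h1) (Or.symm h3) with h | h | h <;> tauto
  rcases ideal_comparable hA hB cAB with iAB | iBA
  · rcases ideal_comparable hB hC cBC with iBC | iCB
    · exact lemmaL_core hA hB hC hD hABne hBCne hACne.symm cAB cBC cCA iAB iBC hDU hit
    · rcases ideal_comparable hA hC cAC with iAC | iCA'
      · -- A ⊑ C ⊑ B
        have := lemmaL_core hA hC hB hD hACne hBCne.symm hABne.symm cAC cCB cBA iAC iCB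
          hDU1 hitACB
        tauto
      · -- C ⊑ A ⊑ B
        have := lemmaL_core hC hA hB hD hACne.symm hABne hBCne cCA cAB cBC iCA' iAB
          hDU4 hitCAB
        tauto
  · rcases ideal_comparable hB hC cBC with iBC | iCB
    · rcases ideal_comparable hA hC cAC with iAC | iCA'
      · -- B ⊑ A ⊑ C
        have := lemmaL_core hB hA hC hD hABne.symm hACne hBCne.symm cBA cAC cCB iBA iAC
          hDU2 hitBAC
        tauto
      · -- B ⊑ C ⊑ A
        have := lemmaL_core hB hC hA hD hBCne hACne.symm hABne cBC cCA cAB iBC iCA'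
          hDU3 hitBCA
        tauto
    · -- C ⊑ B ⊑ A
      have := lemmaL_core hC hB hA hD hBCne.symm hABne.symm hACne cCB cBA cAC iCB iBA
        hDU5 hitCBA
      tauto

end LemmaLGeneral
section Decomp

variable {P : Type*} [Fintype P] [PartialOrder P]

open scoped Classical

/-- vertex set of the chain polytope -/
noncomputable def acVerts (P : Type*) [Fintype P] [PartialOrder P] : Set (P → ℝ) :=
  rho P '' {E : Finset P | IsAntichainF P E}

lemma exists_maximal_above {s : Finset P} {y : P} (hy : y ∈ s) :
    ∃ m ∈ s, y ≤ m ∧ ∀ z ∈ s, ¬ m < z := by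
  classical
  have hne : (s.filter (fun z => y ≤ z)).Nonempty := ⟨y, Finset.mem_filter.2 ⟨hy, le_rfl⟩⟩
  obtain ⟨m, hm, hmax⟩ : ∃ m ∈ s.filter (fun z => y ≤ z), ∀ z ∈ s.filter (fun z => y ≤ z), ¬ m < z := by
    obtain ⟨m, hm⟩ := Finset.exists_maximal hne
    exact ⟨m, hm.1, fun z hz hlt => lt_irrefl _ (lt_of_lt_of_le hlt (hm.2 hz hlt.le))⟩
  have hm' := Finset.mem_filter.1 hm
  refine ⟨m, hm'.1, hm'.2, ?_⟩
  intro z hz hlt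
  exact hmax z (Finset.mem_filter.2 ⟨hz, le_trans hm'.2 hlt.le⟩) hlt

lemma singleton_chain (x : P) : IsChain (· ≤ ·) (↑({x} : Finset P) : Set P) := by
  simp [IsChain, Set.Pairwise]

lemma pair_chain {x m : P} (h : x ≤ m) : IsChain (· ≤ ·) (↑({x, m} : Finset P) : Set P) := by
  intro a ha b hb hne
  simp only [Finset.coe_insert, Finset.coe_singleton, Set.mem_insert_iff,
    Set.mem_singleton_iff] at ha hb
  rcases ha with rfl | rfl <;> rcases hb with rfl | rfl
  · exact absurd rfl hne
  · exact Or.inl h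
  · exact Or.inr h
  · exact absurd rfl hne

lemma chainPolytope_le_one {f : P → ℝ} (hf : f ∈ chainPolytope P) (x : P) : f x ≤ 1 := by
  have := hf.2 {x} (singleton_chain x)
  simpa using this

lemma cp_mem_hull_aux : ∀ n : ℕ, ∀ f ∈ chainPolytope P,
    ((univ : Finset P).filter (fun x => f x ≠ 0)).card ≤ n →
    f ∈ convexHull ℝ (acVerts P) := by
  classical
  intro n
  induction n with
  | zero =>
    intro f hf hcard
    have hsupp : (univ : Finset P).filter (fun x => f x ≠ 0) = ∅ :=
      Finset.card_eq_zero.1 (Nat.le_zero.1 hcard)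
    have hf0 : f = rho P (∅ : Finset P) := by
      funext x
      have : x ∉ (univ : Finset P).filter (fun x => f x ≠ 0) := by simp [hsupp]
      simp only [Finset.mem_filter, Finset.mem_univ, true_and, not_not] at this
      simp [rho, this]
    rw [hf0]
    exact subset_convexHull ℝ _ ⟨∅, by simp [IsAntichainF, IsAntichain], rfl⟩
  | succ n ih =>
    intro f hf hcard
    set supp : Finset P := (univ : Finset P).filter (fun x => f x ≠ 0) with hsuppdef
    by_cases hse : supp = ∅
    · exact ih f hf (by rw [← hsuppdef, hse]; simp)
    have hsne : supp.Nonempty := Finset.nonempty_iff_ne_empty.2 hse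
    have hsupp_mem : ∀ {x : P}, x ∈ supp ↔ f x ≠ 0 := by
      intro x
      rw [hsuppdef]
      simp
    have hfpos : ∀ x ∈ supp, 0 < f x := by
      intro x hx
      exact lt_of_le_of_ne (hf.1 x) (Ne.symm (hsupp_mem.1 hx))
    set M : Finset P := supp.filter (fun x => ∀ y ∈ supp, ¬ x < y) with hMdef
    have hMsub : M ⊆ supp := Finset.filter_subset _ _
    have hMne : M.Nonempty := by
      obtain ⟨y, hy⟩ := hsne
      obtain ⟨m, hm, _, hmax⟩ := exists_maximal_above hy
      exact ⟨m, Finset.mem_filter.2 ⟨hm, hmax⟩⟩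
    have hManti : IsAntichainF P M := by
      intro x hx y hy hne hxy
      have hx' := Finset.mem_filter.1 (by exact_mod_cast hx : x ∈ M)
      have hy' : y ∈ supp := hMsub (by exact_mod_cast hy)
      exact hx'.2 y hy' (lt_of_le_of_ne hxy hne)
    set ε : ℝ := M.inf' hMne f with hεdef
    have hεpos : 0 < ε := by
      rw [hεdef, Finset.lt_inf'_iff]
      intro x hx
      exact hfpos x (hMsub hx)
    have hεle : ∀ x ∈ M, ε ≤ f x := fun x hx => Finset.inf'_le f hx
    obtain ⟨x₀, hx₀M, hx₀⟩ := Finset.exists_mem_eq_inf' hMne f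
    have hε1 : ε ≤ 1 := by
      rw [hεdef, hx₀]
      exact chainPolytope_le_one hf x₀
    have hmaxM : ∀ y ∈ supp, ∃ m ∈ M, y ≤ m := by
      intro y hy
      obtain ⟨m, hm, hym, hmax⟩ := exists_maximal_above hy
      exact ⟨m, Finset.mem_filter.2 ⟨hm, hmax⟩, hym⟩
    by_cases hεlt : ε < 1
    · -- main case
      have h1ε : (0:ℝ) < 1 - ε := by linarith
      set g : P → ℝ := fun x => (f x - ε * rho P M x) / (1 - ε) with hgdef
      have hg0 : ∀ x, x ∉ supp → g x = 0 := by
        intro x hxs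
        have hfx : f x = 0 := by
          by_contra hne
          exact hxs (hsupp_mem.2 hne)
        have hxM : x ∉ M := fun hxM => absurd hfx (hsupp_mem.1 (hMsub hxM))
        rw [hgdef]
        simp [rho, hxM, hfx]
      have hgx₀ : g x₀ = 0 := by
        rw [hgdef]
        simp [rho, hx₀M, ← hx₀, hεdef]
      have hgCP : g ∈ chainPolytope P := by
        constructor
        · intro x
          rw [hgdef]
          apply div_nonneg _ (le_of_lt h1ε)
          by_cases hxM : x ∈ M
          · have := hεle x hxM
            simp only [rho, hxM, if_pos, mul_one]
            linarith
          · have := hf.1 x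
            simp only [rho, hxM, if_neg, not_false_iff, mul_zero]
            linarith
        · intro s hs
          rw [hgdef]
          simp only []
          rw [← Finset.sum_div, div_le_one h1ε, Finset.sum_sub_distrib,
            ← Finset.mul_sum, sum_rho_eq_card]
          by_cases hsM : (s ∩ M).Nonempty
          · have h1 : (1:ℝ) ≤ ((s ∩ M).card : ℝ) := by
              exact_mod_cast Nat.one_le_iff_ne_zero.2
                (Finset.card_ne_zero_of_mem hsM.choose_spec)
            have h2 := hf.2 s hs
            nlinarith
          · rw [Finset.not_nonempty_iff_eq_empty.1 hsM]
            simp only [Finset.card_empty, Nat.cast_zero, mul_zero, sub_zero]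
            -- ∑ f over s ≤ 1 - ε
            set s' : Finset P := s.filter (fun x => f x ≠ 0) with hs'def
            have hsum : ∑ x ∈ s, f x = ∑ x ∈ s', f x := by
              rw [hs'def]
              exact (Finset.sum_filter_ne_zero s).symm
            rw [hsum]
            by_cases hs'e : s'.Nonempty
            · obtain ⟨y, hy, hymax⟩ : ∃ y ∈ s', ∀ z ∈ s', ¬ y < z := by
                obtain ⟨m, hm⟩ := Finset.exists_maximal hs'e
                exact ⟨m, hm.1, fun z hz hlt => lt_irrefl _ (lt_of_lt_of_le hlt (hm.2 hz hlt.le))⟩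
              have hy' := Finset.mem_filter.1 hy
              have hygreatest : ∀ z ∈ s', z ≤ y := by
                intro z hz
                by_cases hzy : z = y
                · exact hzy.le
                · have hz' := Finset.mem_filter.1 hz
                  rcases hs (by exact_mod_cast hz'.1) (by exact_mod_cast hy'.1) hzy with h | h
                  · exact h
                  · exact absurd (lt_of_le_of_ne h (Ne.symm hzy)) (hymax z hz)
              have hysupp : y ∈ supp := hsupp_mem.2 hy'.2
              obtain ⟨m, hmM, hym⟩ := hmaxM y hysupp
              have hms' : m ∉ s' := fun hms' =>
                (Finset.eq_empty_iff_forall_notMem.1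
                  (Finset.not_nonempty_iff_eq_empty.1 hsM) m)
                  (Finset.mem_inter.2 ⟨(Finset.mem_filter.1 hms').1, hmM⟩)
              have hchain' : IsChain (· ≤ ·) (↑(insert m s') : Set P) := by
                rw [Finset.coe_insert]
                apply IsChain.insert
                · intro a ha b hb hab
                  have has : a ∈ s := (Finset.mem_filter.1 (by exact_mod_cast ha)).1
                  have hbs : b ∈ s := (Finset.mem_filter.1 (by exact_mod_cast hb)).1
                  exact hs (by exact_mod_cast has) (by exact_mod_cast hbs) hab
                · intro b hb _
                  exact Or.inr (le_trans (hygreatest b (by exact_mod_cast hb)) hym)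
              have hsum2 := hf.2 (insert m s') hchain'
              rw [Finset.sum_insert hms'] at hsum2
              have hfm : ε ≤ f m := hεle m hmM
              linarith
            · rw [Finset.not_nonempty_iff_eq_empty.1 hs'e]
              simp
              linarith
      -- f is the convex combination
      have hcomb : f = ε • rho P M + (1 - ε) • g := by
        funext x
        rw [hgdef]
        simp only [Pi.add_apply, Pi.smul_apply, smul_eq_mul]
        field_simp
        ring
      have hsuppg : (univ : Finset P).filter (fun x => g x ≠ 0) ⊆ supp \ {x₀} := by
        intro x hx
        have hgx := (Finset.mem_filter.1 hx).2
        refine Finset.mem_sdiff.2 ⟨?_, ?_⟩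
        · by_contra hxs
          exact hgx (hg0 x hxs)
        · intro hxx₀
          rw [Finset.mem_singleton.1 hxx₀] at hgx
          exact hgx hgx₀
      have hcard' : ((univ : Finset P).filter (fun x => g x ≠ 0)).card ≤ n := by
        have h1 := Finset.card_le_card hsuppg
        have h2 : (supp \ {x₀}).card = supp.card - 1 := by
          rw [Finset.card_sdiff_of_subset (Finset.singleton_subset_iff.2 (hMsub hx₀M))]
          simp
        have h3 : supp.card ≤ n + 1 := hcard
        omega
      rw [hcomb]
      exact (convex_convexHull ℝ (acVerts P))
        (subset_convexHull ℝ _ ⟨M, hManti, rfl⟩)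
        (ih g hgCP hcard') (le_of_lt hεpos) (by linarith) (by ring)
    · -- ε = 1 case: f = rho M
      have hε1' : ε = 1 := le_antisymm hε1 (not_lt.1 hεlt)
      have hfM : f = rho P M := by
        funext x
        by_cases hxM : x ∈ M
        · have h1 := chainPolytope_le_one hf x
          have h2 := hεle x hxM
          rw [hε1'] at h2
          simp only [rho, hxM, if_pos]
          linarith
        · simp only [rho, hxM, if_neg, not_false_iff]
          by_contra hne
          have hxs : x ∈ supp := hsupp_mem.2 hne
          obtain ⟨m, hmM, hxm⟩ := hmaxM x hxs
          have hxmne : x ≠ m := fun h => hxM (h ▸ hmM)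
          have hchain := pair_chain hxm
          have hsum := hf.2 {x, m} hchain
          rw [Finset.sum_pair hxmne] at hsum
          have h2 := hεle m hmM
          rw [hε1'] at h2
          have := hfpos x hxs
          linarith
      rw [hfM]
      exact subset_convexHull ℝ _ ⟨M, hManti, rfl⟩

lemma cp_subset_hull : chainPolytope P ⊆ convexHull ℝ (acVerts P) := by
  intro f hf
  exact cp_mem_hull_aux _ f hf le_rfl

end Decomp
section Backward

variable {P : Type*} [Fintype P] [PartialOrder P]

open scoped Classical

lemma chain_triple {a b c : P} (h1 : a ≤ b ∨ b ≤ a) (h2 : b ≤ c ∨ c ≤ b)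
    (h3 : a ≤ c ∨ c ≤ a) : IsChain (· ≤ ·) (↑({a, b, c} : Finset P) : Set P) := by
  intro x hx y hy hne
  simp only [Finset.coe_insert, Finset.coe_singleton, Set.mem_insert_iff,
    Set.mem_singleton_iff] at hx hy
  rcases hx with rfl | rfl | rfl <;> rcases hy with rfl | rfl | rfl <;>
    first
      | exact absurd rfl hne
      | exact h1
      | exact Or.symm h1
      | exact h2
      | exact Or.symm h2
      | exact h3
      | exact Or.symm h3

variable (A B C : Finset P)

/-- rainbow chains -/
noncomputable def rainbow : Finset (Finset P) :=
  (univ : Finset (Finset P)).filter (fun s => IsChain (· ≤ ·) (↑s : Set P) ∧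
    (s ∩ A).Nonempty ∧ (s ∩ B).Nonempty ∧ (s ∩ C).Nonempty)

/-- the exposing linear functional -/
noncomputable def expFun : (P → ℝ) →ₗ[ℝ] ℝ where
  toFun := fun g => (∑ s ∈ rainbow A B C, ∑ x ∈ s, g x) -
    ∑ x ∈ (univ : Finset P).filter (fun x => x ∉ A ∪ B ∪ C), g x
  map_add' := by
    intro g h
    simp only [Pi.add_apply, Finset.sum_add_distrib]
    ring
  map_smul' := by
    intro r g
    simp only [Pi.smul_apply, smul_eq_mul, RingHom.id_apply, ← Finset.mul_sum]
    ring

variable {A B C}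

lemma expFun_apply (g : P → ℝ) : expFun A B C g = (∑ s ∈ rainbow A B C, ∑ x ∈ s, g x) -
    ∑ x ∈ (univ : Finset P).filter (fun x => x ∉ A ∪ B ∪ C), g x := rfl

lemma mem_rainbow {s : Finset P} : s ∈ rainbow A B C ↔ IsChain (· ≤ ·) (↑s : Set P) ∧
    (s ∩ A).Nonempty ∧ (s ∩ B).Nonempty ∧ (s ∩ C).Nonempty := by
  unfold rainbow
  simp

lemma expFun_rho_eq {X : Finset P} (hX : IsAntichainF P X) (hXU : X ⊆ A ∪ B ∪ C)
    (hmeet : ∀ s ∈ rainbow A B C, (s ∩ X).Nonempty) :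
    expFun A B C (rho P X) = ((rainbow A B C).card : ℝ) := by
  rw [expFun_apply]
  have h1 : ∀ s ∈ rainbow A B C, ∑ x ∈ s, rho P X x = 1 := by
    intro s hs
    rw [sum_rho_eq_card]
    have hle := chain_inter_antichain_card_le_one (mem_rainbow.1 hs).1 hX
    have hge : 1 ≤ (s ∩ X).card := Finset.card_pos.2 (hmeet s hs)
    have : (s ∩ X).card = 1 := le_antisymm hle hge
    rw [this]
    norm_num
  have h2 : ∑ x ∈ (univ : Finset P).filter (fun x => x ∉ A ∪ B ∪ C), rho P X x = 0 := by
    apply Finset.sum_eq_zero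
    intro x hx
    have hxU := (Finset.mem_filter.1 hx).2
    have hxX : x ∉ X := fun h => hxU (hXU h)
    simp [rho, hxX]
  rw [Finset.sum_congr rfl h1, h2]
  simp

lemma expFun_le {g : P → ℝ} (hg : g ∈ chainPolytope P) :
    expFun A B C g ≤ ((rainbow A B C).card : ℝ) := by
  rw [expFun_apply]
  have h1 : ∑ s ∈ rainbow A B C, ∑ x ∈ s, g x ≤ ((rainbow A B C).card : ℝ) := by
    calc ∑ s ∈ rainbow A B C, ∑ x ∈ s, g x ≤ ∑ _s ∈ rainbow A B C, (1:ℝ) :=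
      Finset.sum_le_sum (fun s hs => hg.2 s (mem_rainbow.1 hs).1)
    _ = ((rainbow A B C).card : ℝ) := by simp
  have h2 : (0:ℝ) ≤ ∑ x ∈ (univ : Finset P).filter (fun x => x ∉ A ∪ B ∪ C), g x :=
    Finset.sum_nonneg (fun x _ => hg.1 x)
  linarith

lemma expFun_eq_iff {g : P → ℝ} (hg : g ∈ chainPolytope P) :
    expFun A B C g = ((rainbow A B C).card : ℝ) ↔
      ((∀ s ∈ rainbow A B C, ∑ x ∈ s, g x = 1) ∧
        ∀ x, x ∉ A ∪ B ∪ C → g x = 0) := by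
  constructor
  · intro heq
    have ht1 : ∀ s ∈ rainbow A B C, 0 ≤ 1 - ∑ x ∈ s, g x := by
      intro s hs
      have := hg.2 s (mem_rainbow.1 hs).1
      linarith
    have ht2 : (0:ℝ) ≤ ∑ x ∈ (univ : Finset P).filter (fun x => x ∉ A ∪ B ∪ C), g x :=
      Finset.sum_nonneg (fun x _ => hg.1 x)
    have hkey : (∑ s ∈ rainbow A B C, (1 - ∑ x ∈ s, g x)) +
        ∑ x ∈ (univ : Finset P).filter (fun x => x ∉ A ∪ B ∪ C), g x = 0 := by
      rw [expFun_apply] at heq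
      rw [Finset.sum_sub_distrib]
      simp only [Finset.sum_const, nsmul_eq_mul, mul_one]
      linarith
    have hsum1 : ∑ s ∈ rainbow A B C, (1 - ∑ x ∈ s, g x) = 0 := by
      have := Finset.sum_nonneg ht1
      linarith
    have hsum2 : ∑ x ∈ (univ : Finset P).filter (fun x => x ∉ A ∪ B ∪ C), g x = 0 := by
      linarith
    constructor
    · intro s hs
      have := (Finset.sum_eq_zero_iff_of_nonneg ht1).1 hsum1 s hs
      linarith
    · intro x hx
      have hxmem : x ∈ (univ : Finset P).filter (fun x => x ∉ A ∪ B ∪ C) :=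
        Finset.mem_filter.2 ⟨Finset.mem_univ x, hx⟩
      exact (Finset.sum_eq_zero_iff_of_nonneg (fun x _ => hg.1 x)).1 hsum2 x hxmem
  · intro ⟨h1, h2⟩
    rw [expFun_apply, Finset.sum_congr rfl h1]
    have : ∑ x ∈ (univ : Finset P).filter (fun x => x ∉ A ∪ B ∪ C), g x = 0 :=
      Finset.sum_eq_zero (fun x hx => h2 x (Finset.mem_filter.1 hx).2)
    rw [this]
    simp

end Backward
section BackwardMain

variable {P : Type*} [Fintype P] [PartialOrder P]

open scoped Classical

lemma rho_ne {A B : Finset P} (h : A ≠ B) : rho P A ≠ rho P B :=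
  fun he => h (rho_inj he)

noncomputable def acVertsF (P : Type*) [Fintype P] [PartialOrder P] : Finset (P → ℝ) :=
  ((univ : Finset (Finset P)).filter (fun E => IsAntichainF P E)).image (rho P)

lemma coe_acVertsF : (↑(acVertsF P) : Set (P → ℝ)) = acVerts P := by
  unfold acVertsF acVerts
  ext g
  simp

lemma triangle_face_eq {A B C : Finset P}
    (hA : IsAntichainF P A) (hB : IsAntichainF P B) (hC : IsAntichainF P C)
    (hABne : A ≠ B) (hACne : A ≠ C) (hBCne : B ≠ C)
    (cAB : ConnIn P (↑((A \ B) ∪ (B \ A)) : Set P))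
    (cBC : ConnIn P (↑((B \ C) ∪ (C \ B)) : Set P))
    (cCA : ConnIn P (↑((C \ A) ∪ (A \ C)) : Set P)) :
    {x ∈ chainPolytope P | ∀ y ∈ chainPolytope P, expFun A B C y ≤ expFun A B C x}
      = convexHull ℝ ({rho P A, rho P B, rho P C} : Set (P → ℝ)) := by
  classical
  set N : ℝ := ((rainbow A B C).card : ℝ) with hNdef
  have hAU : A ⊆ A ∪ B ∪ C := fun x hx => Finset.mem_union.2
    (Or.inl (Finset.mem_union.2 (Or.inl hx)))
  have hBU : B ⊆ A ∪ B ∪ C := fun x hx => Finset.mem_union.2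
    (Or.inl (Finset.mem_union.2 (Or.inr hx)))
  have hCU : C ⊆ A ∪ B ∪ C := fun x hx => Finset.mem_union.2 (Or.inr hx)
  have hlA : expFun A B C (rho P A) = N :=
    expFun_rho_eq hA hAU (fun s hs => (mem_rainbow.1 hs).2.1)
  have hlB : expFun A B C (rho P B) = N :=
    expFun_rho_eq hB hBU (fun s hs => (mem_rainbow.1 hs).2.2.1)
  have hlC : expFun A B C (rho P C) = N :=
    expFun_rho_eq hC hCU (fun s hs => (mem_rainbow.1 hs).2.2.2)
  have hrAcp := rho_mem_chainPolytope (P := P) hA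
  have hrBcp := rho_mem_chainPolytope (P := P) hB
  have hrCcp := rho_mem_chainPolytope (P := P) hC
  have argmax_iff : ∀ g ∈ chainPolytope P,
      ((∀ y ∈ chainPolytope P, expFun A B C y ≤ expFun A B C g) ↔ expFun A B C g = N) := by
    intro g hg
    constructor
    · intro h
      have h1 := h (rho P A) hrAcp
      rw [hlA] at h1
      exact le_antisymm (expFun_le hg) h1
    · intro h y hy
      rw [h]
      exact expFun_le hy
  apply Set.ext
  intro g
  simp only [Set.mem_setOf_eq]
  constructor
  · rintro ⟨hg, hmax⟩
    have hgN : expFun A B C g = N := (argmax_iff g hg).1 hmax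
    obtain ⟨htight, hzero⟩ := (expFun_eq_iff hg).1 hgN
    -- decompose g as convex combination of antichain vertices
    have hghull : g ∈ convexHull ℝ (↑(acVertsF P) : Set (P → ℝ)) := by
      rw [coe_acVertsF]
      exact cp_subset_hull hg
    obtain ⟨w, hw0, hw1, hcm⟩ := Finset.mem_convexHull.1 hghull
    have hgsum : g = ∑ p ∈ acVertsF P, w p • p := by
      rw [← hcm, Finset.centerMass_eq_of_sum_1 _ id hw1]
      simp
    have hgx : ∀ x : P, g x = ∑ p ∈ acVertsF P, w p * p x := by
      intro x
      rw [hgsum]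
      rw [Finset.sum_apply]
      simp
    -- every vertex in the support hits all rainbow chains exactly once and avoids Uᶜ
    have hver : ∀ p ∈ acVertsF P, w p ≠ 0 →
        p ∈ ({rho P A, rho P B, rho P C} : Set (P → ℝ)) := by
      intro p hp hwp
      obtain ⟨E, hE, hEp⟩ := Finset.mem_image.1 hp
      have hEanti : IsAntichainF P E := (Finset.mem_filter.1 hE).2
      -- chains: for each rainbow s, (s ∩ E).Nonempty
      have hone : ∀ s ∈ rainbow A B C, (s ∩ E).Nonempty := by
        intro s hs
        have hchain := (mem_rainbow.1 hs).1
        have hterm : ∀ q ∈ acVertsF P, 0 ≤ w q * (1 - ∑ x ∈ s, q x) := by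
          intro q hq
          obtain ⟨F, hF, hFq⟩ := Finset.mem_image.1 hq
          have hFanti : IsAntichainF P F := (Finset.mem_filter.1 hF).2
          apply mul_nonneg (hw0 q hq)
          rw [← hFq, sum_rho_eq_card]
          have := chain_inter_antichain_card_le_one hchain hFanti
          have : ((s ∩ F).card : ℝ) ≤ 1 := by exact_mod_cast this
          linarith
        have hsumzero : ∑ q ∈ acVertsF P, w q * (1 - ∑ x ∈ s, q x) = 0 := by
          have hexp : ∑ q ∈ acVertsF P, w q * (1 - ∑ x ∈ s, q x) =
              (∑ q ∈ acVertsF P, w q) - ∑ q ∈ acVertsF P, w q * ∑ x ∈ s, q x := by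
            rw [← Finset.sum_sub_distrib]
            congr 1
            funext q
            ring
          rw [hexp, hw1]
          have : ∑ x ∈ s, g x = ∑ q ∈ acVertsF P, w q * ∑ x ∈ s, q x := by
            rw [Finset.sum_congr rfl (fun x _ => hgx x), Finset.sum_comm]
            congr 1
            funext q
            rw [← Finset.mul_sum]
          rw [← this, htight s hs]
          ring
        have := (Finset.sum_eq_zero_iff_of_nonneg hterm).1 hsumzero p hp
        have hfac : (1:ℝ) - ∑ x ∈ s, p x = 0 := by
          rcases mul_eq_zero.1 this with h | h
          · exact absurd h hwp
          · exact h
        rw [← hEp, sum_rho_eq_card] at hfac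
        have : (s ∩ E).card = 1 := by
          have : ((s ∩ E).card : ℝ) = 1 := by linarith
          exact_mod_cast this
        exact Finset.card_pos.1 (this ▸ Nat.one_pos)
      -- support in U
      have hDU : ∀ x ∈ E, x ∈ A ∨ x ∈ B ∨ x ∈ C := by
        intro x hx
        by_contra hcon
        push_neg at hcon
        have hxU : x ∉ A ∪ B ∪ C := by
          intro h
          rcases Finset.mem_union.1 h with h | h
          · rcases Finset.mem_union.1 h with h | h
            · exact hcon.1 h
            · exact hcon.2.1 h
          · exact hcon.2.2 h
        have hterm : ∀ q ∈ acVertsF P, 0 ≤ w q * q x := by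
          intro q hq
          obtain ⟨F, _, hFq⟩ := Finset.mem_image.1 hq
          apply mul_nonneg (hw0 q hq)
          rw [← hFq]
          unfold rho
          split <;> norm_num
        have hsz : ∑ q ∈ acVertsF P, w q * q x = 0 := by
          rw [← hgx x]
          exact hzero x hxU
        have := (Finset.sum_eq_zero_iff_of_nonneg hterm).1 hsz p hp
        have hpx : p x = 0 := by
          rcases mul_eq_zero.1 this with h | h
          · exact absurd h hwp
          · exact h
        rw [← hEp] at hpx
        unfold rho at hpx
        rw [if_pos hx] at hpx
        norm_num at hpx
      -- rainbow-hit hypothesis for lemmaL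
      have hhit : ∀ a ∈ A, ∀ b ∈ B, ∀ c ∈ C, (a ≤ b ∨ b ≤ a) → (b ≤ c ∨ c ≤ b) →
          (a ≤ c ∨ c ≤ a) → (a ∈ E ∨ b ∈ E ∨ c ∈ E) := by
        intro a ha b hb c hc h1 h2 h3
        have hs : ({a, b, c} : Finset P) ∈ rainbow A B C := by
          rw [mem_rainbow]
          refine ⟨chain_triple h1 h2 h3, ⟨a, ?_⟩, ⟨b, ?_⟩, ⟨c, ?_⟩⟩
          · exact Finset.mem_inter.2 ⟨by simp, ha⟩
          · exact Finset.mem_inter.2 ⟨by simp, hb⟩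
          · exact Finset.mem_inter.2 ⟨by simp, hc⟩
        obtain ⟨v, hv⟩ := hone _ hs
        have hv' := Finset.mem_inter.1 hv
        have hvE := hv'.2
        have : v = a ∨ v = b ∨ v = c := by
          have := hv'.1
          simp at this
          exact this
        rcases this with rfl | rfl | rfl
        · exact Or.inl hvE
        · exact Or.inr (Or.inl hvE)
        · exact Or.inr (Or.inr hvE)
      have := lemmaL hA hB hC hEanti hABne hACne hBCne cAB cBC cCA hDU hhit
      rcases this with rfl | rfl | rfl
      · exact Or.inl hEp.symm
      · exact Or.inr (Or.inl hEp.symm)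
      · exact Or.inr (Or.inr hEp.symm)
    -- conclude membership in the triangle
    have hfilter : ((acVertsF P).filter (fun p => w p ≠ 0)).centerMass w (id : (P → ℝ) → (P → ℝ)) = g := by
      rw [Finset.centerMass_filter_ne_zero, hcm]
    rw [← hfilter]
    apply Finset.centerMass_mem_convexHull
    · intro q hq
      exact hw0 q (Finset.mem_filter.1 hq).1
    · have : ∑ q ∈ (acVertsF P).filter (fun p => w p ≠ 0), w q = 1 := by
        rw [Finset.sum_filter_ne_zero, hw1]
      rw [this]
      norm_num
    · intro q hq
      have hq' := Finset.mem_filter.1 hq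
      exact hver q hq'.1 hq'.2
  · intro hhull
    -- triangle ⊆ face
    have hconv : Convex ℝ {x ∈ chainPolytope P | expFun A B C x = N} := by
      intro x hx y hy a b ha hb hab
      refine ⟨convex_chainPolytope hx.1 hy.1 ha hb hab, ?_⟩
      have : expFun A B C (a • x + b • y) = a * expFun A B C x + b * expFun A B C y := by
        rw [map_add, map_smul, map_smul]
        simp
      rw [this, hx.2, hy.2]
      rw [← add_mul, hab, one_mul]
    have hsub : ({rho P A, rho P B, rho P C} : Set (P → ℝ)) ⊆
        {x ∈ chainPolytope P | expFun A B C x = N} := by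
      intro p hp
      rcases hp with rfl | rfl | rfl
      · exact ⟨hrAcp, hlA⟩
      · exact ⟨hrBcp, hlB⟩
      · exact ⟨hrCcp, hlC⟩
    have := convexHull_min hsub hconv hhull
    exact ⟨this.1, (argmax_iff g this.1).2 this.2⟩

lemma triFace_backward {A B C : Finset P}
    (hA : IsAntichainF P A) (hB : IsAntichainF P B) (hC : IsAntichainF P C)
    (hABne : A ≠ B) (hACne : A ≠ C) (hBCne : B ≠ C)
    (cAB : ConnIn P (↑((A \ B) ∪ (B \ A)) : Set P))
    (cBC : ConnIn P (↑((B \ C) ∪ (C \ B)) : Set P))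
    (cCA : ConnIn P (↑((C \ A) ∪ (A \ C)) : Set P)) :
    IsTriFaceOf P (chainPolytope P) (rho P A) (rho P B) (rho P C) := by
  refine ⟨rho_ne hABne, rho_ne hACne, rho_ne hBCne, ?_⟩
  intro _
  refine ⟨LinearMap.toContinuousLinearMap (expFun A B C), ?_⟩
  have heq := triangle_face_eq hA hB hC hABne hACne hBCne cAB cBC cCA
  rw [← heq]
  apply Set.ext
  intro x
  simp only [Set.mem_setOf_eq, LinearMap.coe_toContinuousLinearMap']

end BackwardMain
section Forward

variable {P : Type*} [Fintype P] [PartialOrder P]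

open scoped Classical

lemma mem_triangle_coeff {u v w z : P → ℝ}
    (h : z ∈ convexHull ℝ ({u, v, w} : Set (P → ℝ))) :
    ∃ α β γ : ℝ, 0 ≤ α ∧ 0 ≤ β ∧ 0 ≤ γ ∧ α + β + γ = 1 ∧
      z = α • u + β • v + γ • w := by
  have hins : ({u, v, w} : Set (P → ℝ)) = insert u {v, w} := rfl
  rw [hins, convexHull_insert ⟨v, by simp⟩, mem_convexJoin] at h
  obtain ⟨a, ha, m, hm, hseg⟩ := h
  rw [Set.mem_singleton_iff] at ha
  subst ha
  rw [convexHull_pair] at hm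
  obtain ⟨c, d, hc, hd, hcd, hm'⟩ := hm
  obtain ⟨p, q, hp, hq, hpq, hz⟩ := hseg
  refine ⟨p, q * c, q * d, hp, mul_nonneg hq hc, mul_nonneg hq hd, ?_, ?_⟩
  · have hqcd : q * c + q * d = q := by rw [← mul_add, hcd, mul_one]
    linarith
  · rw [← hz, ← hm']
    rw [smul_add, smul_smul, smul_smul, add_assoc]

lemma rho_combo_mem {A B C E : Finset P} {α β γ : ℝ}
    (hα : 0 ≤ α) (hβ : 0 ≤ β) (hγ : 0 ≤ γ) (hsum : α + β + γ = 1)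
    (hcomb : rho P E = α • rho P A + β • rho P B + γ • rho P C) :
    E = A ∨ E = B ∨ E = C := by
  classical
  have hval : ∀ x, rho P E x = α * rho P A x + β * rho P B x + γ * rho P C x := by
    intro x
    rw [hcomb]
    simp [Pi.add_apply, Pi.smul_apply, smul_eq_mul]
  have hbound : ∀ (X : Finset P) (x : P), 0 ≤ rho P X x ∧ rho P X x ≤ 1 := by
    intro X x
    unfold rho
    split <;> norm_num
  have key : ∀ (δ : ℝ) (X : Finset P), 0 < δ →
      (∀ x, rho P E x = δ * rho P X x + (1 - δ) * 1 ∨ True) → True := fun _ _ _ _ => trivial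
  -- main claim: positive coefficient forces equality
  have claim : (0 < α → E = A) ∧ (0 < β → E = B) ∧ (0 < γ → E = C) := by
    refine ⟨?_, ?_, ?_⟩
    · intro hpos
      apply Finset.ext
      intro x
      have hv := hval x
      have bA := hbound A x
      have bB := hbound B x
      have bC := hbound C x
      constructor
      · intro hxE
        have hE1 : rho P E x = 1 := by simp [rho, hxE]
        by_contra hxA
        have hA0 : rho P A x = 0 := by simp [rho, hxA]
        rw [hE1, hA0] at hv
        nlinarith
      · intro hxA
        have hA1 : rho P A x = 1 := by simp [rho, hxA]
        by_contra hxE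
        have hE0 : rho P E x = 0 := by simp [rho, hxE]
        rw [hE0, hA1] at hv
        nlinarith
    · intro hpos
      apply Finset.ext
      intro x
      have hv := hval x
      have bA := hbound A x
      have bB := hbound B x
      have bC := hbound C x
      constructor
      · intro hxE
        have hE1 : rho P E x = 1 := by simp [rho, hxE]
        by_contra hxB
        have hB0 : rho P B x = 0 := by simp [rho, hxB]
        rw [hE1, hB0] at hv
        nlinarith
      · intro hxB
        have hB1 : rho P B x = 1 := by simp [rho, hxB]
        by_contra hxE
        have hE0 : rho P E x = 0 := by simp [rho, hxE]
        rw [hE0, hB1] at hv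
        nlinarith
    · intro hpos
      apply Finset.ext
      intro x
      have hv := hval x
      have bA := hbound A x
      have bB := hbound B x
      have bC := hbound C x
      constructor
      · intro hxE
        have hE1 : rho P E x = 1 := by simp [rho, hxE]
        by_contra hxC
        have hC0 : rho P C x = 0 := by simp [rho, hxC]
        rw [hE1, hC0] at hv
        nlinarith
      · intro hxC
        have hC1 : rho P C x = 1 := by simp [rho, hxC]
        by_contra hxE
        have hE0 : rho P E x = 0 := by simp [rho, hxE]
        rw [hE0, hC1] at hv
        nlinarith
  by_cases hα0 : 0 < α
  · exact Or.inl (claim.1 hα0)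
  by_cases hβ0 : 0 < β
  · exact Or.inr (Or.inl (claim.2.1 hβ0))
  by_cases hγ0 : 0 < γ
  · exact Or.inr (Or.inr (claim.2.2 hγ0))
  exfalso
  push_neg at hα0 hβ0 hγ0
  nlinarith

lemma rho_mem_triangle {A B C E : Finset P}
    (h : rho P E ∈ convexHull ℝ ({rho P A, rho P B, rho P C} : Set (P → ℝ))) :
    E = A ∨ E = B ∨ E = C := by
  obtain ⟨α, β, γ, hα, hβ, hγ, hsum, hcomb⟩ := mem_triangle_coeff h
  exact rho_combo_mem hα hβ hγ hsum hcomb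

/-- forward direction for the designated pair (A, B) -/
lemma pair_conn_of_triFace {A B C : Finset P}
    (hA : IsAntichainF P A) (hB : IsAntichainF P B) (hC : IsAntichainF P C)
    (hABne : A ≠ B)
    (htri : IsExposed ℝ (chainPolytope P)
      (convexHull ℝ ({rho P A, rho P B, rho P C} : Set (P → ℝ)))) :
    ConnIn P (↑((A \ B) ∪ (B \ A)) : Set P) := by
  classical
  by_contra hnc
  set W : Finset P := (A \ B) ∪ (B \ A) with hWdef
  have hWne : W.Nonempty := symmdiff_nonempty hABne
  obtain ⟨S, hSW, hSne, hWSne, hcross⟩ := not_connIn_split hWne hnc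
  have hcross' : ∀ x ∈ S, ∀ y ∈ W \ S, x ≠ y → ¬ (x ≤ y ∨ y ≤ x) := by
    intro x hx y hy hne hcomp
    exact hcross x hx y hy ⟨hne, hcomp⟩
  set A' : Finset P := (A ∩ B) ∪ ((A \ B) ∩ S) ∪ ((B \ A) \ S) with hA'def
  set B' : Finset P := (A ∩ B) ∪ ((B \ A) ∩ S) ∪ ((A \ B) \ S) with hB'def
  have memA' : ∀ x, x ∈ A' ↔ ((x ∈ A ∧ x ∈ B) ∨ (x ∈ A ∧ x ∉ B ∧ x ∈ S) ∨
      (x ∈ B ∧ x ∉ A ∧ x ∉ S)) := by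
    intro x
    rw [hA'def]
    simp only [Finset.mem_union, Finset.mem_inter, Finset.mem_sdiff]
    tauto
  have memB' : ∀ x, x ∈ B' ↔ ((x ∈ A ∧ x ∈ B) ∨ (x ∈ B ∧ x ∉ A ∧ x ∈ S) ∨
      (x ∈ A ∧ x ∉ B ∧ x ∉ S)) := by
    intro x
    rw [hB'def]
    simp only [Finset.mem_union, Finset.mem_inter, Finset.mem_sdiff]
    tauto
  have memW : ∀ x, x ∈ W ↔ ((x ∈ A ∧ x ∉ B) ∨ (x ∈ B ∧ x ∉ A)) := by
    intro x
    rw [hWdef]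
    simp only [Finset.mem_union, Finset.mem_sdiff]
  -- A' is an antichain
  have hA'anti : IsAntichainF P A' := by
    intro x hx y hy hne hxy
    have hx' := (memA' x).1 (by exact_mod_cast hx)
    have hy' := (memA' y).1 (by exact_mod_cast hy)
    have hcompxy : x ≤ y ∨ y ≤ x := Or.inl hxy
    rcases hx' with ⟨hxA, hxB⟩ | ⟨hxA, hxB, hxS⟩ | ⟨hxB, hxA, hxS⟩ <;>
      rcases hy' with ⟨hyA, hyB⟩ | ⟨hyA, hyB, hyS⟩ | ⟨hyB, hyA, hyS⟩
    · exact noComp hA hxA hyA hne hcompxy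
    · exact noComp hA hxA hyA hne hcompxy
    · exact noComp hB hxB hyB hne hcompxy
    · exact noComp hA hxA hyA hne hcompxy
    · exact noComp hA hxA hyA hne hcompxy
    · exact hcross' x hxS y
        (Finset.mem_sdiff.2 ⟨(memW y).2 (Or.inr ⟨hyB, hyA⟩), hyS⟩) hne hcompxy
    · exact noComp hB hxB hyB hne hcompxy
    · exact hcross' y hyS x
        (Finset.mem_sdiff.2 ⟨(memW x).2 (Or.inr ⟨hxB, hxA⟩), hxS⟩)
        (Ne.symm hne) (Or.symm hcompxy)
    · exact noComp hB hxB hyB hne hcompxy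
  have hB'anti : IsAntichainF P B' := by
    intro x hx y hy hne hxy
    have hx' := (memB' x).1 (by exact_mod_cast hx)
    have hy' := (memB' y).1 (by exact_mod_cast hy)
    have hcompxy : x ≤ y ∨ y ≤ x := Or.inl hxy
    rcases hx' with ⟨hxA, hxB⟩ | ⟨hxB, hxA, hxS⟩ | ⟨hxA, hxB, hxS⟩ <;>
      rcases hy' with ⟨hyA, hyB⟩ | ⟨hyB, hyA, hyS⟩ | ⟨hyA, hyB, hyS⟩
    · exact noComp hA hxA hyA hne hcompxy
    · exact noComp hB hxB hyB hne hcompxy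
    · exact noComp hA hxA hyA hne hcompxy
    · exact noComp hB hxB hyB hne hcompxy
    · exact noComp hB hxB hyB hne hcompxy
    · exact hcross' x hxS y
        (Finset.mem_sdiff.2 ⟨(memW y).2 (Or.inl ⟨hyA, hyB⟩), hyS⟩) hne hcompxy
    · exact noComp hA hxA hyA hne hcompxy
    · exact hcross' y hyS x
        (Finset.mem_sdiff.2 ⟨(memW x).2 (Or.inl ⟨hxA, hxB⟩), hxS⟩)
        (Ne.symm hne) (Or.symm hcompxy)
    · exact noComp hA hxA hyA hne hcompxy
  -- sum identity
  have hsum : rho P A + rho P B = rho P A' + rho P B' := by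
    funext x
    have h1 := memA' x
    have h2 := memB' x
    simp only [Pi.add_apply, rho, h1, h2]
    by_cases hxA : x ∈ A <;> by_cases hxB : x ∈ B <;> by_cases hxS : x ∈ S <;>
      simp [hxA, hxB, hxS]
  -- A' ≠ A, A' ≠ B, B' ≠ A, B' ≠ B, A' ≠ B'
  obtain ⟨x₀, hx₀S⟩ := hSne
  obtain ⟨y₀, hy₀⟩ := hWSne
  have hy₀W := (Finset.mem_sdiff.1 hy₀).1
  have hy₀S := (Finset.mem_sdiff.1 hy₀).2
  have hx₀W := hSW hx₀S
  have hA'neA : A' ≠ A := by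
    intro h
    rcases (memW y₀).1 hy₀W with ⟨hyA, hyB⟩ | ⟨hyB, hyA⟩
    · have : y₀ ∉ A' := by
        intro hc
        rcases (memA' y₀).1 hc with ⟨_, h'⟩ | ⟨_, _, h'⟩ | ⟨h', _, _⟩
        · exact hyB h'
        · exact hy₀S h'
        · exact hyB h'
      rw [h] at this
      exact this hyA
    · have : y₀ ∈ A' := (memA' y₀).2 (Or.inr (Or.inr ⟨hyB, hyA, hy₀S⟩))
      rw [h] at this
      exact hyA this
  have hA'neB : A' ≠ B := by
    intro h
    rcases (memW x₀).1 hx₀W with ⟨hxA, hxB⟩ | ⟨hxB, hxA⟩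
    · have : x₀ ∈ A' := (memA' x₀).2 (Or.inr (Or.inl ⟨hxA, hxB, hx₀S⟩))
      rw [h] at this
      exact hxB this
    · have : x₀ ∉ A' := by
        intro hc
        rcases (memA' x₀).1 hc with ⟨h', _⟩ | ⟨h', _, _⟩ | ⟨_, _, h'⟩
        · exact hxA h'
        · exact hxA h'
        · exact h' hx₀S
      rw [h] at this
      exact this hxB
  have hB'neA : B' ≠ A := by
    intro h
    rcases (memW x₀).1 hx₀W with ⟨hxA, hxB⟩ | ⟨hxB, hxA⟩
    · have : x₀ ∉ B' := by
        intro hc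
        rcases (memB' x₀).1 hc with ⟨_, h'⟩ | ⟨h', _, _⟩ | ⟨_, _, h'⟩
        · exact hxB h'
        · exact hxB h'
        · exact h' hx₀S
      rw [h] at this
      exact this hxA
    · have : x₀ ∈ B' := (memB' x₀).2 (Or.inr (Or.inl ⟨hxB, hxA, hx₀S⟩))
      rw [h] at this
      exact hxA this
  have hB'neB : B' ≠ B := by
    intro h
    rcases (memW y₀).1 hy₀W with ⟨hyA, hyB⟩ | ⟨hyB, hyA⟩
    · have : y₀ ∈ B' := (memB' y₀).2 (Or.inr (Or.inr ⟨hyA, hyB, hy₀S⟩))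
      rw [h] at this
      exact hyB this
    · have : y₀ ∉ B' := by
        intro hc
        rcases (memB' y₀).1 hc with ⟨h', _⟩ | ⟨_, _, h'⟩ | ⟨h', _, _⟩
        · exact hyA h'
        · exact hy₀S h'
        · exact hyA h'
      rw [h] at this
      exact this hyB
  have hA'neB' : A' ≠ B' := by
    intro h
    rcases (memW x₀).1 hx₀W with ⟨hxA, hxB⟩ | ⟨hxB, hxA⟩
    · have h1 : x₀ ∈ A' := (memA' x₀).2 (Or.inr (Or.inl ⟨hxA, hxB, hx₀S⟩))
      have h2 : x₀ ∉ B' := by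
        intro hc
        rcases (memB' x₀).1 hc with ⟨_, h'⟩ | ⟨h', _, _⟩ | ⟨_, _, h'⟩
        · exact hxB h'
        · exact hxB h'
        · exact h' hx₀S
      rw [h] at h1
      exact h2 h1
    · have h1 : x₀ ∈ B' := (memB' x₀).2 (Or.inr (Or.inl ⟨hxB, hxA, hx₀S⟩))
      have h2 : x₀ ∉ A' := by
        intro hc
        rcases (memA' x₀).1 hc with ⟨h', _⟩ | ⟨h', _, _⟩ | ⟨_, _, h'⟩
        · exact hxA h'
        · exact hxA h'
        · exact h' hx₀S
      rw [← h] at h1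
      exact h2 h1
  -- use the exposing functional
  have hne : (convexHull ℝ ({rho P A, rho P B, rho P C} : Set (P → ℝ))).Nonempty :=
    ⟨rho P A, subset_convexHull ℝ _ (by simp)⟩
  obtain ⟨l, hface⟩ := htri hne
  have hAface : rho P A ∈ convexHull ℝ ({rho P A, rho P B, rho P C} : Set (P → ℝ)) :=
    subset_convexHull ℝ _ (by simp)
  have hBface : rho P B ∈ convexHull ℝ ({rho P A, rho P B, rho P C} : Set (P → ℝ)) :=
    subset_convexHull ℝ _ (by simp)
  rw [hface] at hAface hBface
  obtain ⟨hAcp, hAmax⟩ := hAface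
  obtain ⟨hBcp, hBmax⟩ := hBface
  have hA'cp : rho P A' ∈ chainPolytope P := rho_mem_chainPolytope hA'anti
  have hB'cp : rho P B' ∈ chainPolytope P := rho_mem_chainPolytope hB'anti
  have hlsum : l (rho P A') + l (rho P B') = l (rho P A) + l (rho P B) := by
    have h1 : l (rho P A' + rho P B') = l (rho P A + rho P B) := by rw [← hsum]
    rw [map_add, map_add] at h1
    linarith
  have hA'le : l (rho P A') ≤ l (rho P A) := hAmax _ hA'cp
  have hB'le : l (rho P B') ≤ l (rho P A) := hAmax _ hB'cp
  have hABeq : l (rho P B) = l (rho P A) :=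
    le_antisymm (hAmax _ hBcp) (hBmax _ hAcp)
  have hA'eq : l (rho P A') = l (rho P A) := by linarith
  have hB'eq : l (rho P B') = l (rho P A) := by linarith
  have hA'mem : rho P A' ∈ convexHull ℝ ({rho P A, rho P B, rho P C} : Set (P → ℝ)) := by
    rw [hface]
    exact ⟨hA'cp, fun y hy => by rw [hA'eq]; exact hAmax y hy⟩
  have hB'mem : rho P B' ∈ convexHull ℝ ({rho P A, rho P B, rho P C} : Set (P → ℝ)) := by
    rw [hface]
    exact ⟨hB'cp, fun y hy => by rw [hB'eq]; exact hAmax y hy⟩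
  have hA'cases := rho_mem_triangle hA'mem
  have hB'cases := rho_mem_triangle hB'mem
  rcases hA'cases with h | h | h
  · exact hA'neA h
  · exact hA'neB h
  · rcases hB'cases with h' | h' | h'
    · exact hB'neA h'
    · exact hB'neB h'
    · exact hA'neB' (h.trans h'.symm)

end Forward

/-- For pairwise distinct antichains `A`, `B`, `C`,
`conv {ρ A, ρ B, ρ C}` is a triangular 2-face of the chain polytope iff each of
`A △ B`, `B △ C`, `C △ A` is connected in `P`. -/
theorem triFace_chainPolytope_iff
    (A B C : Finset P) (hA : IsAntichainF P A) (hB : IsAntichainF P B) (hC : IsAntichainF P C)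
    (hAB : A ≠ B) (hAC : A ≠ C) (hBC : B ≠ C) :
    IsTriFaceOf P (chainPolytope P) (rho P A) (rho P B) (rho P C) ↔
      (ConnIn P (↑((A \ B) ∪ (B \ A))) ∧ ConnIn P (↑((B \ C) ∪ (C \ B))) ∧
        ConnIn P (↑((C \ A) ∪ (A \ C)))) := by
  constructor
  · rintro ⟨-, -, -, hexp⟩
    refine ⟨?_, ?_, ?_⟩
    · exact pair_conn_of_triFace hA hB hC hAB hexp
    · have hset : ({rho P B, rho P C, rho P A} : Set (P → ℝ)) =
          {rho P A, rho P B, rho P C} := by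
        ext g
        simp only [Set.mem_insert_iff, Set.mem_singleton_iff]
        tauto
      exact pair_conn_of_triFace hB hC hA hBC (by rw [hset]; exact hexp)
    · have hset : ({rho P C, rho P A, rho P B} : Set (P → ℝ)) =
          {rho P A, rho P B, rho P C} := by
        ext g
        simp only [Set.mem_insert_iff, Set.mem_singleton_iff]
        tauto
      exact pair_conn_of_triFace hC hA hB hAC.symm (by rw [hset]; exact hexp)
  · rintro ⟨c1, c2, c3⟩
    exact triFace_backward hA hB hC hAB hAC hBC c1 c2 c3
end

section
/- Let P be a maximal ranked poset of rank n and let I ⊆ J be nonempty poset ideals of P such that, for some k with 0 ≤ k ≤ n, both max(I) ⊆ P_k and max(J) ⊆ P_k. Then max(I) ⊆ max(J) and J ∖ I = max(J) ∖ max(I) (hence max(I) △ max(J) = J ∖ I). -/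
open Finset
open scoped Classical

variable (P : Type*) [Fintype P] [PartialOrder P]

/-- In a maximal ranked poset, if `I ⊆ J` are nonempty poset ideals with
`max(I), max(J) ⊆ P_k` for some `k ≤ n`, then `max(I) ⊆ max(J)`,
`J \ I = max(J) \ max(I)` and hence `max(I) △ max(J) = J \ I`. -/
theorem maxSet_subset_and_sdiff_eq
    (r : P → ℕ) (n : ℕ) (hr : IsMaxRanked P r n)
    (I J : Finset P) (hI : IsIdealF P I) (hJ : IsIdealF P J)
    (hIne : I.Nonempty) (hJne : J.Nonempty) (hIJ : I ⊆ J)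
    (k : ℕ) (hk : k ≤ n)
    (hmi : maxSet P I ⊆ level P r k) (hmj : maxSet P J ⊆ level P r k) :
    maxSet P I ⊆ maxSet P J ∧ J \ I = maxSet P J \ maxSet P I ∧
      (maxSet P I \ maxSet P J) ∪ (maxSet P J \ maxSet P I) = J \ I := by
  classical
  obtain ⟨hle, hsurj, hlt⟩ := hr
  have hmax : ∀ (W : Finset P), ∀ x ∈ W, ∃ m ∈ maxSet P W, x ≤ m := by
    intro W x hx
    obtain ⟨m, hm, hmb⟩ :=
      Finset.exists_max_image (W.filter (fun y => x ≤ y)) r ⟨x, by simp [hx]⟩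
    rw [Finset.mem_filter] at hm
    refine ⟨m, ?_, hm.2⟩
    rw [maxSet, Finset.mem_filter]
    refine ⟨hm.1, fun y hy hlt' => ?_⟩
    have hyk : r y ≤ r m := hmb y (Finset.mem_filter.mpr ⟨hy, hm.2.trans hlt'.le⟩)
    exact absurd ((hlt m y).mp hlt') (not_lt.mpr hyk)
  have rle : ∀ {x m : P}, x ≤ m → r x ≤ r m := by
    intro x m h
    rcases h.lt_or_eq with h' | h'
    · exact ((hlt x m).mp h').le
    · exact h' ▸ le_rfl
  have rkI : ∀ x ∈ maxSet P I, r x = k := fun x hx => (Finset.mem_filter.mp (hmi hx)).2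
  have rkJ : ∀ x ∈ maxSet P J, r x = k := fun x hx => (Finset.mem_filter.mp (hmj hx)).2
  have F1I : ∀ x ∈ I, r x ≤ k := by
    intro x hx
    obtain ⟨m, hm, hxm⟩ := hmax I x hx
    exact (rle hxm).trans (rkI m hm).le
  have F1J : ∀ x ∈ J, r x ≤ k := by
    intro x hx
    obtain ⟨m, hm, hxm⟩ := hmax J x hx
    exact (rle hxm).trans (rkJ m hm).le
  obtain ⟨x0, hx0⟩ := hIne
  obtain ⟨m0, hm0, -⟩ := hmax I x0 hx0
  have hm0I : m0 ∈ I := (Finset.mem_filter.mp hm0).1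
  have hm0k : r m0 = k := rkI m0 hm0
  have F3 : ∀ x : P, r x < k → x ∈ I := fun x hxk =>
    hI hm0I ((hlt x m0).mpr (by omega)).le
  have memMaxI : ∀ x, x ∈ maxSet P I ↔ x ∈ I ∧ r x = k := by
    intro x
    constructor
    · intro hx
      exact ⟨(Finset.mem_filter.mp hx).1, rkI x hx⟩
    · rintro ⟨hxI, hxk⟩
      rw [maxSet, Finset.mem_filter]
      refine ⟨hxI, fun y hy hlt' => ?_⟩
      have := F1I y hy
      have := (hlt x y).mp hlt'
      omega
  have memMaxJ : ∀ x, x ∈ maxSet P J ↔ x ∈ J ∧ r x = k := by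
    intro x
    constructor
    · intro hx
      exact ⟨(Finset.mem_filter.mp hx).1, rkJ x hx⟩
    · rintro ⟨hxJ, hxk⟩
      rw [maxSet, Finset.mem_filter]
      refine ⟨hxJ, fun y hy hlt' => ?_⟩
      have := F1J y hy
      have := (hlt x y).mp hlt'
      omega
  have h1 : maxSet P I ⊆ maxSet P J := by
    intro x hx
    rw [memMaxI] at hx
    exact (memMaxJ x).mpr ⟨hIJ hx.1, hx.2⟩
  have h2 : J \ I = maxSet P J \ maxSet P I := by
    ext x
    simp only [Finset.mem_sdiff, memMaxI, memMaxJ]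
    constructor
    · rintro ⟨hxJ, hxI⟩
      have hk1 : r x ≤ k := F1J x hxJ
      have hk2 : r x = k := by
        rcases lt_or_eq_of_le hk1 with h | h
        · exact absurd (F3 x h) hxI
        · exact h
      exact ⟨⟨hxJ, hk2⟩, fun h => hxI h.1⟩
    · rintro ⟨⟨hxJ, hxk⟩, hnx⟩
      exact ⟨hxJ, fun hxI => hnx ⟨hxI, hxk⟩⟩
  refine ⟨h1, h2, ?_⟩
  have h3 : maxSet P I \ maxSet P J = ∅ := Finset.sdiff_eq_empty_iff_subset.mpr h1
  rw [h3, Finset.empty_union, h2]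
end
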